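/- arXiv:1610.00814 — 7 statements merged into one kernel-verified Lean document; each statement's English description precedes it below -/
import Mathlib

section
/- Let I be a nondegenerate interval of ℝ, f : I → I continuous, m > 2, and let B = {β₁ < β₂ < ⋯ < β_m} be an m-orbit of f. Then there exists r ∈ {1,…,m−1} such that f(β_r) ≥ β_{r+1} and f(β_{r+1}) ≤ β_r; in particular the digraph of B contains a loop J_r → J_r. -/
open Set Function

/-- `c` is a periodic point of `f` of (exact) period `n`:
`f^[n] c = c` and `f^[k] c ≠ c` for `1 ≤ k < n`. -/
def PeriodicOfPeriod (f : ℝ → ℝ) (n : ℕ) (c : ℝ) : Prop :=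
  f^[n] c = c ∧ ∀ k, 0 < k → k < n → f^[k] c ≠ c

/-- `β` (with 1-based indices `1,…,m`) enumerates an `m`-orbit of `f` in `I` in
increasing order: `β 1 < β 2 < ⋯ < β m`, the points lie in `I`, and they form the
orbit `{c, f c, …, f^[m-1] c}` of a periodic point `c` of period `m`. -/
def IsOrbit (f : ℝ → ℝ) (I : Set ℝ) (m : ℕ) (β : ℕ → ℝ) : Prop :=
  (∀ i, 1 ≤ i → i < m → β i < β (i + 1)) ∧
  (∀ i, 1 ≤ i → i ≤ m → β i ∈ I) ∧
  ∃ c ∈ I, PeriodicOfPeriod f m c ∧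
    β '' Set.Icc 1 m = {x | ∃ k, k < m ∧ f^[k] c = x}

/-- The digraph of the orbit `β₁ < ⋯ < β_m`: an edge `J_i → J_s` means
`[β_s, β_{s+1}] ⊆ [min (f β_i) (f β_{i+1}), max (f β_i) (f β_{i+1})]`. -/
def HasEdge (f : ℝ → ℝ) (β : ℕ → ℝ) (i s : ℕ) : Prop :=
  Set.Icc (β s) (β (s + 1)) ⊆
    Set.Icc (min (f (β i)) (f (β (i + 1)))) (max (f (β i)) (f (β (i + 1))))

/-- For any `m`-orbit `B = {β₁ < ⋯ < β_m}` (`m > 2`) of a continuous map `f : I → I`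
there is `r ∈ {1,…,m-1}` with `f β_r ≥ β_{r+1}` and `f β_{r+1} ≤ β_r`; in particular
the digraph of `B` contains the loop `J_r → J_r`. -/
theorem digraph_has_loop (I : Set ℝ) (hI : I.OrdConnected)
    (hne : ∃ a ∈ I, ∃ b ∈ I, a ≠ b)
    (f : ℝ → ℝ) (hf : ContinuousOn f I) (hmaps : Set.MapsTo f I I)
    (m : ℕ) (hm : 2 < m) (β : ℕ → ℝ) (hB : IsOrbit f I m β) :
    ∃ r, 1 ≤ r ∧ r ≤ m - 1 ∧ β (r + 1) ≤ f (β r) ∧ f (β (r + 1)) ≤ β r ∧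
      HasEdge f β r r := by
  classical
  obtain ⟨hmono, hmem, c, hcI, ⟨hfm, hper⟩, horb⟩ := hB
  -- strict monotonicity on [1, m]
  have hlt : ∀ j, j ≤ m → ∀ i, 1 ≤ i → i < j → β i < β j := by
    intro j
    induction j with
    | zero => omega
    | succ n ih =>
      intro hjm i hi hij
      rcases Nat.lt_succ_iff_lt_or_eq.mp hij with h | h
      · exact lt_trans (ih (by omega) i hi h) (hmono n (by omega) (by omega))
      · subst h; exact hmono i hi (by omega)
  have hle : ∀ i j, 1 ≤ i → i ≤ j → j ≤ m → β i ≤ β j := by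
    intro i j hi hij hjm
    rcases eq_or_lt_of_le hij with h | h
    · subst h; exact le_refl _
    · exact (hlt j hjm i hi h).le
  -- orbit membership
  have hOmem : ∀ i, 1 ≤ i → i ≤ m → ∃ k, k < m ∧ f^[k] c = β i := by
    intro i hi him
    have h : β i ∈ β '' Set.Icc 1 m := ⟨i, ⟨hi, him⟩, rfl⟩
    rw [horb] at h
    exact h
  -- f maps the orbit into itself
  have hfB : ∀ i, 1 ≤ i → i ≤ m → ∃ j, 1 ≤ j ∧ j ≤ m ∧ β j = f (β i) := by
    intro i hi him
    obtain ⟨k, hk, hkx⟩ := hOmem i hi him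
    have h : f (β i) ∈ {x | ∃ k, k < m ∧ f^[k] c = x} := by
      by_cases hc1 : k + 1 < m
      · exact ⟨k + 1, hc1, by rw [Function.iterate_succ_apply', hkx]⟩
      · have hk1 : k + 1 = m := by omega
        refine ⟨0, by omega, ?_⟩
        simp only [Function.iterate_zero_apply]
        rw [← hfm, ← hk1, Function.iterate_succ_apply', hkx]
    rw [← horb] at h
    obtain ⟨j, ⟨hj1, hjm⟩, hje⟩ := h
    exact ⟨j, hj1, hjm, hje⟩
  -- no orbit point is fixed
  have hnefix : ∀ i, 1 ≤ i → i ≤ m → f (β i) ≠ β i := by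
    intro i hi him hfx
    obtain ⟨k, hk, hkx⟩ := hOmem i hi him
    have hfix : ∀ n, f^[n] (β i) = β i := by
      intro n; induction n with
      | zero => rfl
      | succ n ih => rw [Function.iterate_succ_apply', ih, hfx]
    have hx : f^[m - k] (β i) = c := by
      rw [← hkx, ← Function.iterate_add_apply, show m - k + k = m by omega]
      exact hfm
    have hc : c = β i := by rw [← hx, hfix]
    have h1 : f^[1] c ≠ c := hper 1 one_pos (by omega)
    apply h1
    rw [hc, Function.iterate_one, hfx]
  -- β 1 moves right
  have hP1 : 1 ≤ (1 : ℕ) ∧ 1 ≤ m - 1 ∧ β 1 < f (β 1) := by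
    refine ⟨le_refl 1, by omega, ?_⟩
    obtain ⟨j, hj1, hjm, hje⟩ := hfB 1 le_rfl (by omega)
    have h : β 1 ≤ β j := hle 1 j le_rfl hj1 hjm
    rw [hje] at h
    rcases lt_or_eq_of_le h with h' | h'
    · exact h'
    · exact absurd h'.symm (hnefix 1 le_rfl (by omega))
  set P : ℕ → Prop := fun i => 1 ≤ i ∧ i ≤ m - 1 ∧ β i < f (β i) with hPdef
  set r := Nat.findGreatest P (m - 1) with hrdef
  have hPr : P r := Nat.findGreatest_spec (m := 1) (by omega) hP1
  obtain ⟨hr1, hrm, hrlt⟩ := hPr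
  -- f moves β (r+1) left
  have hfr1 : f (β (r + 1)) < β (r + 1) := by
    have hne'' := hnefix (r + 1) (by omega) (by omega)
    by_cases hcase : r + 1 ≤ m - 1
    · have hng : ¬P (r + 1) :=
        Nat.findGreatest_is_greatest (by omega : r < r + 1) hcase
      have hnotlt : ¬ (β (r + 1) < f (β (r + 1))) := fun hlt' =>
        hng ⟨by omega, hcase, hlt'⟩
      rcases lt_or_eq_of_le (not_lt.mp hnotlt) with h' | h'
      · exact h'
      · exact absurd h' hne''
    · -- r + 1 = m, and β m is the maximum of the orbit
      have hrm' : r + 1 = m := by omega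
      obtain ⟨j, hj1, hjm, hje⟩ := hfB (r + 1) (by omega) (by omega)
      have h : β j ≤ β (r + 1) := hle j (r + 1) hj1 (by omega) (by omega)
      rw [hje] at h
      rcases lt_or_eq_of_le h with h' | h'
      · exact h'
      · exact absurd h' hne''
  -- the two key inequalities
  have key1 : β (r + 1) ≤ f (β r) := by
    obtain ⟨j, hj1, hjm, hje⟩ := hfB r hr1 (by omega)
    have hjr : r < j := by
      by_contra h
      push_neg at h
      have := hle j r hj1 h (by omega)
      rw [hje] at this
      exact absurd hrlt (not_lt.mpr this)
    calc β (r + 1) ≤ β j := hle (r + 1) j (by omega) hjr (by omega)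
      _ = f (β r) := hje
  have key2 : f (β (r + 1)) ≤ β r := by
    obtain ⟨j, hj1, hjm, hje⟩ := hfB (r + 1) (by omega) (by omega)
    have hjr : j ≤ r := by
      by_contra h
      push_neg at h
      have := hle (r + 1) j (by omega) h hjm
      rw [hje] at this
      exact absurd hfr1 (not_lt.mpr this)
    calc f (β (r + 1)) = β j := hje.symm
      _ ≤ β r := hle j r hj1 hjr (by omega)
  have hrr1 : β r < β (r + 1) := hmono r hr1 (by omega)
  refine ⟨r, hr1, hrm, key1, key2, ?_⟩
  intro x hx
  constructor
  · exact le_trans (min_le_right _ _) (le_trans key2 hx.1)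
  · exact le_trans (le_trans hx.2 key1) (le_max_left _ _)
end

section
/- Let I be a nondegenerate interval of ℝ, f : I → I continuous, m ≥ 2, and let B = {β₁ < ⋯ < β_m} be an m-orbit of f. Then for every r ∈ {1,…,m−1} there exist r', r'' ∈ {1,…,m−1} such that the digraph of B has edges J_{r'} → J_r and J_r → J_{r''}; moreover, unless m is even and r = m/2, one may choose r' ≠ r, and unless m = 2, one may choose r'' ≠ r. -/
open Set Function

/-!
Since `β` is increasing and `f` permutes the orbit, `f` induces a cyclic permutation `σ` of the
indices `1, …, m` with `β (σ i) = f (β i)`, and `J_i → J_s` holds whenever `s` lies between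
`σ i` and `σ (i + 1)`. Outgoing edges: `σ r ≠ σ (r + 1)`, and a loop is forced only if
`{σ r, σ (r + 1)} = {r, r + 1}`, i.e. `σ` fixes `r` or swaps `r` and `r + 1`, which a cycle
of length `m ≥ 3` cannot do. Incoming edges: `σ i ≤ r` must change truth value along `i`,
since `σ` takes both values `1` and `m`; if it changes only at `i = r`, then either
`{1, …, r}` is `σ`-invariant, impossible for a cycle, or `σ` exchanges `{1, …, r}` and
`{r + 1, …, m}`, which forces `2 r = m`.
-/

def IsCyclicOn {α : Type*} (g : α → α) (s : Set α) : Prop :=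
  MapsTo g s s ∧ ∀ x ∈ s, ∀ y ∈ s, ∃ k, g^[k] x = y

namespace IsCyclicOn

variable {α : Type*} {g : α → α} {s : Set α}

theorem surjOn (hg : IsCyclicOn g s) : SurjOn g s s := by
  intro y hy
  obtain ⟨k, hk⟩ := hg.2 (g y) (hg.1 hy) y hy
  cases k with
  | zero => exact ⟨y, hy, hk⟩
  | succ n =>
    rw [iterate_succ_apply'] at hk
    exact ⟨g^[n] (g y), hg.1.iterate n (hg.1 hy), hk⟩

theorem injOn (hg : IsCyclicOn g s) (hs : s.Finite) : InjOn g s :=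
  ((hs.surjOn_iff_bijOn_of_mapsTo hg.1).1 hg.surjOn).injOn

theorem subset_of_mapsTo (hg : IsCyclicOn g s) {t : Set α} (ht : MapsTo g t t) {x : α}
    (hxs : x ∈ s) (hxt : x ∈ t) : s ⊆ t := by
  intro y hy
  obtain ⟨k, rfl⟩ := hg.2 x hxs y hy
  exact ht.iterate k hxt

theorem subset_singleton_of_apply_eq (hg : IsCyclicOn g s) {x : α} (hx : x ∈ s)
    (h : g x = x) : s ⊆ {x} :=
  hg.subset_of_mapsTo (by simp [MapsTo, h]) hx rfl

theorem subset_pair_of_apply_apply_eq (hg : IsCyclicOn g s) {x : α} (hx : x ∈ s)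
    (h : g (g x) = x) : s ⊆ {x, g x} :=
  hg.subset_of_mapsTo (by simp [MapsTo, h]) hx (mem_insert x _)

theorem exists_lift {ι : Type*} [Nonempty ι] {β : ι → α} {t : Set ι}
    (hg : IsCyclicOn g (β '' t)) (hβ : InjOn β t) :
    ∃ σ : ι → ι, IsCyclicOn σ t ∧ ∀ i ∈ t, β (σ i) = g (β i) := by
  have hgβ : ∀ i ∈ t, ∃ j ∈ t, β j = g (β i) := fun i hi => hg.1 (mem_image_of_mem β hi)
  set σ := fun i => invFunOn β t (g (β i))
  have hσt : MapsTo σ t t := fun i hi => invFunOn_mem (hgβ i hi)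
  have hσβ : ∀ i ∈ t, β (σ i) = g (β i) := fun i hi => invFunOn_eq (hgβ i hi)
  have hiter : ∀ k, ∀ i ∈ t, β (σ^[k] i) = g^[k] (β i) := by
    intro k
    induction k with
    | zero => simp
    | succ k ih =>
      intro i hi
      rw [iterate_succ_apply', iterate_succ_apply', hσβ _ (hσt.iterate k hi), ih i hi]
  refine ⟨σ, ⟨hσt, fun i hi j hj => ?_⟩, hσβ⟩
  obtain ⟨k, hk⟩ := hg.2 (β i) (mem_image_of_mem β hi) (β j) (mem_image_of_mem β hj)
  exact ⟨k, hβ (hσt.iterate k hi) hj (by rw [hiter k i hi, hk])⟩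

end IsCyclicOn

namespace IsOrbit

variable {f : ℝ → ℝ} {I : Set ℝ} {m : ℕ} {β : ℕ → ℝ}

theorem strictMonoOn (hB : IsOrbit f I m β) : StrictMonoOn β (Icc 1 m) :=
  strictMonoOn_of_lt_succ ordConnected_Icc fun i _ hi hi' => by
    rw [Order.succ_eq_add_one] at hi' ⊢
    exact hB.1 i hi.1 hi'.2

theorem isCyclicOn (hB : IsOrbit f I m β) : IsCyclicOn f (β '' Icc 1 m) := by
  obtain ⟨-, -, c, -, ⟨hc, -⟩, horb⟩ := hB
  rw [horb]
  constructor
  · rintro _ ⟨k, hk, rfl⟩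
    rcases Nat.lt_or_ge (k + 1) m with hk' | hk'
    · exact ⟨k + 1, hk', iterate_succ_apply' f k c⟩
    · refine ⟨0, by omega, ?_⟩
      rw [← iterate_succ_apply' f k c, show k.succ = m by omega, hc, iterate_zero_apply]
  · rintro _ ⟨k, hk, rfl⟩ _ ⟨l, -, rfl⟩
    refine ⟨m - k + l, ?_⟩
    rw [← iterate_add_apply, show m - k + l + k = l + m by omega, iterate_add_apply, hc]

end IsOrbit

def IndexCovers (σ : ℕ → ℕ) (i s : ℕ) : Prop :=
  min (σ i) (σ (i + 1)) ≤ s ∧ s < max (σ i) (σ (i + 1))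

theorem hasEdge_of_indexCovers {f : ℝ → ℝ} {β : ℕ → ℝ} {σ : ℕ → ℕ} {m i s : ℕ}
    (hβ : MonotoneOn β (Icc 1 m)) (hσ : MapsTo σ (Icc 1 m) (Icc 1 m))
    (hσβ : ∀ i ∈ Icc 1 m, β (σ i) = f (β i)) (hi : i ∈ Ico 1 m) (hs : s ∈ Ico 1 m)
    (hcov : IndexCovers σ i s) : HasEdge f β i s := by
  obtain ⟨hi₁, him⟩ := hi
  obtain ⟨hs₁, hsm⟩ := hs
  have hiI : i ∈ Icc 1 m := ⟨hi₁, him.le⟩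
  have hi'I : i + 1 ∈ Icc 1 m := ⟨by omega, him⟩
  have hsI : s ∈ Icc 1 m := ⟨hs₁, hsm.le⟩
  have hs'I : s + 1 ∈ Icc 1 m := ⟨by omega, hsm⟩
  rw [HasEdge, ← hσβ i hiI, ← hσβ (i + 1) hi'I]
  apply Icc_subset_Icc
  · rcases min_le_iff.1 hcov.1 with h | h
    · exact min_le_of_left_le (hβ (hσ hiI) hsI h)
    · exact min_le_of_right_le (hβ (hσ hi'I) hsI h)
  · rcases lt_max_iff.1 hcov.2 with h | h
    · exact le_max_of_le_left (hβ hs'I (hσ hiI) h)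
    · exact le_max_of_le_right (hβ hs'I (hσ hi'I) h)

theorem iff_of_forall_iff_succ {P : ℕ → Prop} {a b : ℕ}
    (h : ∀ i ∈ Ico a b, P i ↔ P (i + 1)) : ∀ k ∈ Icc a b, P a ↔ P k := by
  rintro k ⟨hak, hkb⟩
  induction k, hak using Nat.le_induction with
  | base => rfl
  | succ k hak ih => exact (ih (by omega)).trans (h k ⟨hak, by omega⟩)

theorem two_mul_eq_of_mapsTo_of_mapsTo {σ : ℕ → ℕ} {m r : ℕ} (hinj : InjOn σ (Icc 1 m))
    (hr : r ≤ m) (h₁ : MapsTo σ (Icc 1 r) (Icc (r + 1) m))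
    (h₂ : MapsTo σ (Icc (r + 1) m) (Icc 1 r)) : 2 * r = m := by
  have hle₁ := Finset.card_le_card_of_injOn σ (s := Finset.Icc 1 r) (t := Finset.Icc (r + 1) m)
    (by simpa only [Finset.coe_Icc] using h₁)
    (by simpa only [Finset.coe_Icc] using hinj.mono (Icc_subset_Icc_right hr))
  have hle₂ := Finset.card_le_card_of_injOn σ (s := Finset.Icc (r + 1) m) (t := Finset.Icc 1 r)
    (by simpa only [Finset.coe_Icc] using h₂)
    (by simpa only [Finset.coe_Icc] using hinj.mono (Icc_subset_Icc_left (by omega)))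
  simp only [Nat.card_Icc] at hle₁ hle₂
  omega

namespace IsCyclicOn

variable {σ : ℕ → ℕ} {m r : ℕ}

theorem exists_indexCovers_to (hσ : IsCyclicOn σ (Icc 1 m)) (hr : r ∈ Ico 1 m) :
    ∃ i ∈ Ico 1 m, IndexCovers σ i r := by
  obtain ⟨hr₁, hrm⟩ := hr
  by_contra! h
  have hconst := iff_of_forall_iff_succ (P := fun i => σ i ≤ r) fun i hi => by
    have := h i hi
    unfold IndexCovers at this
    omega
  obtain ⟨a, ha, ha1⟩ := hσ.surjOn (show 1 ∈ Icc 1 m from ⟨le_rfl, by omega⟩)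
  obtain ⟨b, hb, hbm⟩ := hσ.surjOn (show m ∈ Icc 1 m from ⟨by omega, le_rfl⟩)
  have := (hconst a ha).symm.trans (hconst b hb)
  simp only [ha1, hbm] at this
  omega

theorem exists_indexCovers_to_ne (hσ : IsCyclicOn σ (Icc 1 m)) (hr : r ∈ Ico 1 m)
    (h2r : 2 * r ≠ m) : ∃ i ∈ Ico 1 m, i ≠ r ∧ IndexCovers σ i r := by
  obtain ⟨hr₁, hrm⟩ := hr
  by_contra! h
  have hstep : ∀ i, 1 ≤ i → i < m → i ≠ r → (σ i ≤ r ↔ σ (i + 1) ≤ r) := fun i hi₁ him hir => by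
    have := h i ⟨hi₁, him⟩ hir
    unfold IndexCovers at this
    omega
  have hlow := iff_of_forall_iff_succ (P := fun i => σ i ≤ r) (a := 1) (b := r)
    fun i ⟨hi₁, hir⟩ => hstep i hi₁ (by omega) (by omega)
  have hhigh := iff_of_forall_iff_succ (P := fun i => σ i ≤ r) (a := r + 1) (b := m)
    fun i ⟨hri, him⟩ => hstep i (by omega) him (by omega)
  have hσlow : ∀ i ∈ Icc 1 r, σ i ∈ Icc 1 m := fun i ⟨hi₁, hir⟩ => hσ.1 ⟨hi₁, by omega⟩
  have hσhigh : ∀ i ∈ Icc (r + 1) m, σ i ∈ Icc 1 m := fun i ⟨hri, him⟩ => hσ.1 ⟨by omega, him⟩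
  by_cases h1 : σ 1 ≤ r
  · have hinv : MapsTo σ (Icc 1 r) (Icc 1 r) := fun i hi => ⟨(hσlow i hi).1, (hlow i hi).1 h1⟩
    have := hσ.subset_of_mapsTo hinv ⟨le_rfl, by omega⟩ ⟨le_rfl, hr₁⟩
      (show m ∈ Icc 1 m from ⟨by omega, le_rfl⟩)
    exact absurd this.2 (by omega)
  · obtain ⟨a, ⟨ha₁, ham⟩, ha⟩ := hσ.surjOn (show 1 ∈ Icc 1 m from ⟨le_rfl, by omega⟩)
    have har : r + 1 ≤ a := by
      by_contra! har
      exact h1 ((hlow a ⟨ha₁, by omega⟩).2 (by simp only [ha]; omega))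
    have hup : σ (r + 1) ≤ r := (hhigh a ⟨har, ham⟩).2 (by simp only [ha]; omega)
    refine h2r (two_mul_eq_of_mapsTo_of_mapsTo (hσ.injOn (finite_Icc 1 m)) hrm.le ?_ ?_)
    · exact fun i hi => ⟨by have := (hlow i hi).not.1 h1; omega, (hσlow i hi).2⟩
    · exact fun i hi => ⟨(hσhigh i hi).1, (hhigh i hi).1 hup⟩

theorem apply_ne_apply_succ (hσ : IsCyclicOn σ (Icc 1 m)) (hr : r ∈ Ico 1 m) :
    σ r ≠ σ (r + 1) := fun h => by
  obtain ⟨hr₁, hrm⟩ := hr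
  have := hσ.injOn (finite_Icc 1 m) ⟨hr₁, hrm.le⟩ ⟨by omega, hrm⟩ h
  omega

theorem exists_indexCovers_from (hσ : IsCyclicOn σ (Icc 1 m)) (hr : r ∈ Ico 1 m) :
    ∃ s ∈ Ico 1 m, IndexCovers σ r s := by
  have hne := hσ.apply_ne_apply_succ hr
  obtain ⟨hr₁, hrm⟩ := hr
  obtain ⟨h₁, h₁'⟩ := hσ.1 ⟨hr₁, hrm.le⟩
  obtain ⟨h₂, h₂'⟩ := hσ.1 (show r + 1 ∈ Icc 1 m from ⟨by omega, hrm⟩)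
  exact ⟨min (σ r) (σ (r + 1)), ⟨by omega, by omega⟩, by unfold IndexCovers; omega⟩

theorem exists_indexCovers_from_ne (hσ : IsCyclicOn σ (Icc 1 m)) (hr : r ∈ Ico 1 m)
    (hm : m ≠ 2) : ∃ s ∈ Ico 1 m, s ≠ r ∧ IndexCovers σ r s := by
  have hne := hσ.apply_ne_apply_succ hr
  obtain ⟨hr₁, hrm⟩ := hr
  have hmem : ∀ i, 1 ≤ i → i ≤ m → i ∈ Icc 1 m := fun i h h' => ⟨h, h'⟩
  obtain ⟨h₁, h₁'⟩ := hσ.1 (hmem r hr₁ hrm.le)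
  obtain ⟨h₂, h₂'⟩ := hσ.1 (hmem (r + 1) (by omega) hrm)
  have hfix : σ r ≠ r := fun h => by
    have := hσ.subset_singleton_of_apply_eq (hmem r hr₁ hrm.le) h (hmem (r + 1) (by omega) hrm)
    simp at this
  have hswap : ¬(σ r = r + 1 ∧ σ (r + 1) = r) := fun ⟨h, h'⟩ => by
    have hsub := hσ.subset_pair_of_apply_apply_eq (hmem r hr₁ hrm.le) (by rw [h, h'])
    have h1 := hsub (hmem 1 le_rfl (by omega))
    have h3 := hsub (hmem 3 (by omega) (by omega))
    simp only [mem_insert_iff, mem_singleton_iff, h] at h1 h3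
    omega
  by_cases hmin : min (σ r) (σ (r + 1)) = r
  · exact ⟨r + 1, ⟨by omega, by omega⟩, by omega, by unfold IndexCovers; omega⟩
  · exact ⟨_, ⟨by omega, by omega⟩, hmin, by unfold IndexCovers; omega⟩

end IsCyclicOn

theorem digraph_in_out_edges_general (I : Set ℝ) (f : ℝ → ℝ) (m : ℕ) (β : ℕ → ℝ)
    (hB : IsOrbit f I m β) :
    ∀ r, 1 ≤ r → r ≤ m - 1 →
      (∃ r', 1 ≤ r' ∧ r' ≤ m - 1 ∧ HasEdge f β r' r) ∧
      (∃ r'', 1 ≤ r'' ∧ r'' ≤ m - 1 ∧ HasEdge f β r r'') ∧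
      (¬(Even m ∧ 2 * r = m) →
        ∃ r', 1 ≤ r' ∧ r' ≤ m - 1 ∧ r' ≠ r ∧ HasEdge f β r' r) ∧
      (m ≠ 2 → ∃ r'', 1 ≤ r'' ∧ r'' ≤ m - 1 ∧ r'' ≠ r ∧ HasEdge f β r r'') := by
  obtain ⟨σ, hσ, hσβ⟩ := hB.isCyclicOn.exists_lift hB.strictMonoOn.injOn
  have hedge {i s : ℕ} (hi : i ∈ Ico 1 m) (hs : s ∈ Ico 1 m) (hcov : IndexCovers σ i s) :
      HasEdge f β i s :=
    hasEdge_of_indexCovers hB.strictMonoOn.monotoneOn hσ.1 hσβ hi hs hcov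
  intro r hr₁ hr₂
  have hr : r ∈ Ico 1 m := ⟨hr₁, by omega⟩
  refine ⟨?_, ?_, fun hmid => ?_, fun hm => ?_⟩
  · obtain ⟨i, hi, hcov⟩ := hσ.exists_indexCovers_to hr
    exact ⟨i, hi.1, Nat.le_sub_one_of_lt hi.2, hedge hi hr hcov⟩
  · obtain ⟨s, hs, hcov⟩ := hσ.exists_indexCovers_from hr
    exact ⟨s, hs.1, Nat.le_sub_one_of_lt hs.2, hedge hr hs hcov⟩
  · have h2r : 2 * r ≠ m := fun h => hmid ⟨⟨r, by omega⟩, h⟩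
    obtain ⟨i, hi, hir, hcov⟩ := hσ.exists_indexCovers_to_ne hr h2r
    exact ⟨i, hi.1, Nat.le_sub_one_of_lt hi.2, hir, hedge hi hr hcov⟩
  · obtain ⟨s, hs, hsr, hcov⟩ := hσ.exists_indexCovers_from_ne hr hm
    exact ⟨s, hs.1, Nat.le_sub_one_of_lt hs.2, hsr, hedge hr hs hcov⟩

/-- In the digraph of an `m`-orbit (`m ≥ 2`), every vertex `J_r` has an incoming
edge `J_{r'} → J_r` and an outgoing edge `J_r → J_{r''}`; moreover one may choose
`r' ≠ r` unless `m` is even and `r = m/2`, and one may choose `r'' ≠ r`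
unless `m = 2`. -/
theorem digraph_in_out_edges (I : Set ℝ) (hI : I.OrdConnected)
    (hne : ∃ a ∈ I, ∃ b ∈ I, a ≠ b)
    (f : ℝ → ℝ) (hf : ContinuousOn f I) (hmaps : Set.MapsTo f I I)
    (m : ℕ) (hm : 2 ≤ m) (β : ℕ → ℝ) (hB : IsOrbit f I m β) :
    ∀ r, 1 ≤ r → r ≤ m - 1 →
      (∃ r', 1 ≤ r' ∧ r' ≤ m - 1 ∧ HasEdge f β r' r) ∧
      (∃ r'', 1 ≤ r'' ∧ r'' ≤ m - 1 ∧ HasEdge f β r r'') ∧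
      (¬(Even m ∧ 2 * r = m) →
        ∃ r', 1 ≤ r' ∧ r' ≤ m - 1 ∧ r' ≠ r ∧ HasEdge f β r' r) ∧
      (m ≠ 2 → ∃ r'', 1 ≤ r'' ∧ r'' ≤ m - 1 ∧ r'' ≠ r ∧ HasEdge f β r r'') :=
  digraph_in_out_edges_general I f m β hB
end

section
/- Let I be a nondegenerate interval of ℝ, f : I → I continuous, m ≥ 2, and let B = {β₁ < ⋯ < β_m} be an m-orbit of f. Let β', β'' ∈ B with β' < β'' and [β', β''] ≠ [β₁, β_m]. Then there exist r', r'' ∈ {1,…,m−1} such that J_{r'} ⊆ [β', β''], J_{r''} ⊄ [β', β''], and the digraph of B has the edge J_{r'} → J_{r''}. -/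
open Set Function

/-- Strict monotonicity of `β` on `[1, m]` from the step condition. -/
lemma beta_smono (m : ℕ) (β : ℕ → ℝ) (h : ∀ i, 1 ≤ i → i < m → β i < β (i + 1)) :
    ∀ i j, 1 ≤ i → i < j → j ≤ m → β i < β j := by
  intro i j
  induction j with
  | zero => intros; omega
  | succ n ih =>
    intro hi hij hjm
    rcases eq_or_lt_of_le (Nat.lt_succ_iff.mp hij) with h1 | h1
    · subst h1; exact h i hi (by omega)
    · exact (ih hi h1 (by omega)).trans (h n (by omega) (by omega))

/-- Discrete intermediate value: if `P a` and `¬ P b` with `a ≤ b`, some adjacent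
pair flips. -/
lemma discrete_ivt (P : ℕ → Prop) (a b : ℕ) (hab : a ≤ b) (ha : P a) (hb : ¬ P b) :
    ∃ i, a ≤ i ∧ i < b ∧ P i ∧ ¬ P (i + 1) := by
  by_contra hcon
  push_neg at hcon
  have key : ∀ n, a + n ≤ b → P (a + n) := by
    intro n
    induction n with
    | zero => intro _; exact ha
    | succ k ih =>
      intro hk
      exact hcon (a + k) (by omega) (by omega) (ih (by omega))
  have := key (b - a) (by omega)
  rw [show a + (b - a) = b by omega] at this
  exact hb this

/-- Mixed adjacent pair: if `P` holds somewhere in `[p,q]` and fails somewhere in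
`[p,q]`, some adjacent pair in `[p,q]` is mixed. -/
lemma mixed_adjacent (P : ℕ → Prop) (p q j j' : ℕ) (hj1 : p ≤ j) (hj2 : j ≤ q)
    (hj'1 : p ≤ j') (hj'2 : j' ≤ q) (hPj : P j) (hPj' : ¬ P j') :
    ∃ i, p ≤ i ∧ i + 1 ≤ q ∧ ((P i ∧ ¬ P (i + 1)) ∨ (¬ P i ∧ P (i + 1))) := by
  rcases le_total j j' with h | h
  · obtain ⟨i, h1, h2, h3, h4⟩ := discrete_ivt P j j' h hPj hPj'
    exact ⟨i, by omega, by omega, Or.inl ⟨h3, h4⟩⟩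
  · obtain ⟨i, h1, h2, h3, h4⟩ := discrete_ivt (fun n => ¬ P n) j' j h hPj' (not_not_intro hPj)
    exact ⟨i, by omega, by omega, Or.inr ⟨h3, not_not.mp h4⟩⟩

/-- If `β', β'' ∈ B` with `β' < β''` and `[β', β''] ≠ [β₁, β_m]`, then there are
vertices `J_{r'} ⊆ [β', β'']` and `J_{r''} ⊄ [β', β'']` with an edge
`J_{r'} → J_{r''}` in the digraph of the `m`-orbit `B`. -/
theorem digraph_escape_edge (I : Set ℝ) (hI : I.OrdConnected)
    (hne : ∃ a ∈ I, ∃ b ∈ I, a ≠ b)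
    (f : ℝ → ℝ) (hf : ContinuousOn f I) (hmaps : Set.MapsTo f I I)
    (m : ℕ) (hm : 2 ≤ m) (β : ℕ → ℝ) (hB : IsOrbit f I m β)
    (β' β'' : ℝ) (hβ' : β' ∈ β '' Set.Icc 1 m) (hβ'' : β'' ∈ β '' Set.Icc 1 m)
    (hlt : β' < β'') (hneq : Set.Icc β' β'' ≠ Set.Icc (β 1) (β m)) :
    ∃ r' r'', 1 ≤ r' ∧ r' ≤ m - 1 ∧ 1 ≤ r'' ∧ r'' ≤ m - 1 ∧
      Set.Icc (β r') (β (r' + 1)) ⊆ Set.Icc β' β'' ∧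
      ¬Set.Icc (β r'') (β (r'' + 1)) ⊆ Set.Icc β' β'' ∧
      HasEdge f β r' r'' := by
  obtain ⟨hmono, hmem, c, hcI, hper, horb⟩ := hB
  obtain ⟨p, hpIcc, rfl⟩ := hβ'
  obtain ⟨q, hqIcc, rfl⟩ := hβ''
  obtain ⟨hp1, hpm⟩ := hpIcc
  obtain ⟨hq1, hqm⟩ := hqIcc
  have hsm : ∀ i j, 1 ≤ i → i < j → j ≤ m → β i < β j := beta_smono m β hmono
  have hmono' : ∀ i j, 1 ≤ i → i ≤ j → j ≤ m → β i ≤ β j := by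
    intro i j hi hij hj
    rcases eq_or_lt_of_le hij with h | h
    · subst h; exact le_rfl
    · exact le_of_lt (hsm i j hi h hj)
  have hpq : p < q := by
    by_contra h
    push_neg at h
    exact absurd hlt (not_lt.mpr (hmono' q p hq1 h hpm))
  have hnotall : ¬ (p = 1 ∧ q = m) := by
    rintro ⟨h1, h2⟩
    exact hneq (by rw [h1, h2])
  have hBmem : ∀ i, 1 ≤ i → i ≤ m → β i ∈ β '' Set.Icc 1 m :=
    fun i h1 h2 => ⟨i, ⟨h1, h2⟩, rfl⟩
  -- reflect order back to indices
  have hrefl : ∀ i j, 1 ≤ i → i ≤ m → 1 ≤ j → j ≤ m → β i ≤ β j → i ≤ j := by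
    intro i j hi1 hi2 hj1 hj2 hle
    by_contra hc
    push_neg at hc
    exact absurd hle (not_le.mpr (hsm j i hj1 hc hi2))
  -- the orbit set is invariant under f
  have hBinv : ∀ x ∈ β '' Set.Icc 1 m, f x ∈ β '' Set.Icc 1 m := by
    intro x hx
    rw [horb] at hx ⊢
    obtain ⟨k, hk, rfl⟩ := hx
    rcases Nat.lt_or_ge (k + 1) m with h | h
    · exact ⟨k + 1, h, by rw [Function.iterate_succ_apply']⟩
    · have hkm : k + 1 = m := by omega
      refine ⟨0, by omega, ?_⟩
      have h2 : f^[k + 1] c = c := by rw [hkm]; exact hper.1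
      rw [Function.iterate_zero_apply, ← Function.iterate_succ_apply' f k c]
      exact h2.symm
  -- f is injective on the orbit
  have hinj : ∀ x ∈ β '' Set.Icc 1 m, ∀ y ∈ β '' Set.Icc 1 m, f x = f y → x = y := by
    have key : ∀ a b, a < m → b < m → a ≤ b → f^[a + 1] c = f^[b + 1] c → a = b := by
      intro a b ham hbm hab he
      by_contra hne'
      have hab' : a < b := lt_of_le_of_ne hab hne'
      have h2 : f^[(m - 1 - b) + (a + 1)] c = f^[(m - 1 - b) + (b + 1)] c := by
        have h3 : f^[m - 1 - b] (f^[a + 1] c) = f^[m - 1 - b] (f^[b + 1] c) := by rw [he]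
        rwa [← Function.iterate_add_apply, ← Function.iterate_add_apply] at h3
      rw [show (m - 1 - b) + (b + 1) = m by omega, hper.1] at h2
      exact hper.2 ((m - 1 - b) + (a + 1)) (by omega) (by omega) h2
    intro x hx y hy hxy
    rw [horb] at hx hy
    obtain ⟨k, hk, rfl⟩ := hx
    obtain ⟨l, hl, rfl⟩ := hy
    have h1 : f^[k + 1] c = f^[l + 1] c := by
      rw [Function.iterate_succ_apply', Function.iterate_succ_apply']
      exact hxy
    rcases le_total k l with h | h
    · rw [key k l hk hl h h1]
    · rw [key l k hl hk h h1.symm]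
  -- any orbit point reaches any other
  have hreach : ∀ x ∈ β '' Set.Icc 1 m, ∀ y ∈ β '' Set.Icc 1 m, ∃ k, f^[k] x = y := by
    intro x hx y hy
    rw [horb] at hx hy
    obtain ⟨a, ham, rfl⟩ := hx
    obtain ⟨b, hbm, rfl⟩ := hy
    refine ⟨(m - a) + b, ?_⟩
    rw [← Function.iterate_add_apply, show (m - a) + b + a = b + m by omega,
      Function.iterate_add_apply, hper.1]
  -- some orbit point of [β p, β q] escapes
  have hesc : ∃ j, p ≤ j ∧ j ≤ q ∧ ¬ f (β j) ∈ Set.Icc (β p) (β q) := by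
    by_contra hcon
    push_neg at hcon
    have hT : ∀ k, f^[k] (β p) ∈ β '' Set.Icc 1 m ∧ f^[k] (β p) ∈ Set.Icc (β p) (β q) := by
      intro k
      induction k with
      | zero =>
        exact ⟨hBmem p hp1 hpm, ⟨le_rfl, le_of_lt hlt⟩⟩
      | succ k ih =>
        obtain ⟨hB1, hI1⟩ := ih
        obtain ⟨j, hj, hje⟩ := hB1
        rw [Function.iterate_succ_apply', ← hje]
        rw [← hje] at hI1
        have hjp : p ≤ j := hrefl p j hp1 hpm hj.1 hj.2 hI1.1
        have hjq : j ≤ q := hrefl j q hj.1 hj.2 hq1 hqm hI1.2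
        exact ⟨hBinv _ (hBmem j hj.1 hj.2), hcon j hjp hjq⟩
    obtain ⟨k1, hk1⟩ := hreach (β p) (hBmem p hp1 hpm) (β 1) (hBmem 1 le_rfl (by omega))
    have h1T := (hT k1).2
    rw [hk1] at h1T
    have hp1' : p = 1 := by
      by_contra h
      exact absurd h1T.1 (not_le.mpr (hsm 1 p le_rfl (by omega) hpm))
    obtain ⟨k2, hk2⟩ := hreach (β p) (hBmem p hp1 hpm) (β m) (hBmem m (by omega) le_rfl)
    have hmT := (hT k2).2
    rw [hk2] at hmT
    have hq' : q = m := by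
      by_contra h
      exact absurd hmT.2 (not_le.mpr (hsm q m hq1 (by omega) le_rfl))
    exact hnotall ⟨hp1', hq'⟩
  -- each image has an index
  have hidx : ∀ j, 1 ≤ j → j ≤ m → ∃ a, 1 ≤ a ∧ a ≤ m ∧ f (β j) = β a := by
    intro j h1 h2
    obtain ⟨a, ha, he⟩ := hBinv (β j) (hBmem j h1 h2)
    exact ⟨a, ha.1, ha.2, he.symm⟩
  -- subset helpers
  have hsub : ∀ r, p ≤ r → r + 1 ≤ q → Set.Icc (β r) (β (r + 1)) ⊆ Set.Icc (β p) (β q) :=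
    fun r h1 h2 => Set.Icc_subset_Icc (hmono' p r hp1 h1 (by omega))
      (hmono' (r + 1) q (by omega) h2 hqm)
  have hnotsub_left : ∀ r, 1 ≤ r → r < p →
      ¬ Set.Icc (β r) (β (r + 1)) ⊆ Set.Icc (β p) (β q) := by
    intro r h1 h2 hss
    have := hss (Set.left_mem_Icc.mpr (le_of_lt (hsm r (r + 1) h1 (by omega) (by omega))))
    exact absurd this.1 (not_le.mpr (hsm r p h1 h2 hpm))
  have hnotsub_right : ∀ r, q ≤ r → r + 1 ≤ m →
      ¬ Set.Icc (β r) (β (r + 1)) ⊆ Set.Icc (β p) (β q) := by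
    intro r h1 h2 hss
    have := hss (Set.right_mem_Icc.mpr (le_of_lt (hsm r (r + 1) (by omega) (by omega) h2)))
    exact absurd this.2 (not_le.mpr (hsm q (r + 1) hq1 (by omega) h2))
  -- edge helper
  have edge_cover : ∀ i s, min (f (β i)) (f (β (i + 1))) ≤ β s →
      β (s + 1) ≤ max (f (β i)) (f (β (i + 1))) → HasEdge f β i s :=
    fun i s h1 h2 => Set.Icc_subset_Icc h1 h2
  obtain ⟨j0, hj0p, hj0q, hj0out⟩ := hesc
  simp only [Set.mem_Icc, not_and_or, not_le] at hj0out
  rcases hj0out with hbelow | habove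
  · -- some image below β p
    by_cases hall : ∀ j, p ≤ j → j ≤ q → f (β j) < β p
    · -- all images below: take r' = p, both images below β p
      obtain ⟨a, ha1, ham, hea⟩ := hidx p hp1 hpm
      obtain ⟨b, hb1, hbm, heb⟩ := hidx (p + 1) (by omega) (by omega)
      have hfa : β a < β p := hea ▸ hall p le_rfl (le_of_lt hpq)
      have hfb : β b < β p := heb ▸ hall (p + 1) (by omega) hpq
      have hap : a < p := by
        by_contra h
        push_neg at h
        exact absurd hfa (not_lt.mpr (hmono' p a hp1 h ham))
      have hbp : b < p := by
        by_contra h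
        push_neg at h
        exact absurd hfb (not_lt.mpr (hmono' p b hp1 h hbm))
      have hne' : a ≠ b := by
        intro h
        subst h
        have : β p = β (p + 1) := hinj _ (hBmem p hp1 hpm) _ (hBmem (p + 1) (by omega) (by omega))
          (by rw [hea, heb])
        exact absurd this (ne_of_lt (hsm p (p + 1) hp1 (by omega) (by omega)))
      rcases lt_or_gt_of_ne hne' with hab | hab
      · refine ⟨p, a, hp1, by omega, ha1, by omega, hsub p le_rfl hpq,
          hnotsub_left a ha1 hap, edge_cover p a ?_ ?_⟩
        · exact le_trans (min_le_left _ _) (le_of_eq hea)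
        · exact le_trans (hmono' (a + 1) b (by omega) hab hbm)
            (le_trans (le_of_eq heb.symm) (le_max_right _ _))
      · refine ⟨p, b, hp1, by omega, hb1, by omega, hsub p le_rfl hpq,
          hnotsub_left b hb1 hbp, edge_cover p b ?_ ?_⟩
        · exact le_trans (min_le_right _ _) (le_of_eq heb)
        · exact le_trans (hmono' (b + 1) a (by omega) hab ham)
            (le_trans (le_of_eq hea.symm) (le_max_left _ _))
    · -- mixed: some image below β p, some image ≥ β p
      push_neg at hall
      obtain ⟨j', hj'p, hj'q, hj'ge⟩ := hall
      obtain ⟨i, hip, hiq, hcase⟩ := mixed_adjacent (fun n => f (β n) < β p) p q j0 j'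
        hj0p hj0q hj'p hj'q hbelow (not_lt.mpr hj'ge)
      -- in both orientations: one endpoint maps below β p, the other maps ≥ β p
      have hmain : ∀ u v, (u = i ∧ v = i + 1 ∨ u = i + 1 ∧ v = i) →
          f (β u) < β p → β p ≤ f (β v) →
          ∃ r' r'', 1 ≤ r' ∧ r' ≤ m - 1 ∧ 1 ≤ r'' ∧ r'' ≤ m - 1 ∧
            Set.Icc (β r') (β (r' + 1)) ⊆ Set.Icc (β p) (β q) ∧
            ¬Set.Icc (β r'') (β (r'' + 1)) ⊆ Set.Icc (β p) (β q) ∧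
            HasEdge f β r' r'' := by
        intro u v huv hu hv
        have hu1 : 1 ≤ u := by omega
        have hum : u ≤ m := by omega
        obtain ⟨a, ha1, ham, hea⟩ := hidx u hu1 hum
        have hfa : β a < β p := hea ▸ hu
        have hap : a < p := by
          by_contra h
          push_neg at h
          exact absurd hfa (not_lt.mpr (hmono' p a hp1 h ham))
        have hp2 : 2 ≤ p := by omega
        have hpp : p - 1 + 1 = p := by omega
        refine ⟨i, p - 1, by omega, by omega, by omega, by omega, hsub i hip hiq,
          hnotsub_left (p - 1) (by omega) (by omega), edge_cover i (p - 1) ?_ ?_⟩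
        · have h1 : f (β u) ≤ β (p - 1) := hea ▸ hmono' a (p - 1) ha1 (by omega) (by omega)
          rcases huv with ⟨rfl, -⟩ | ⟨rfl, -⟩
          · exact le_trans (min_le_left _ _) h1
          · exact le_trans (min_le_right _ _) h1
        · rw [hpp]
          rcases huv with ⟨-, rfl⟩ | ⟨-, rfl⟩
          · exact le_trans hv (le_max_right _ _)
          · exact le_trans hv (le_max_left _ _)
      rcases hcase with ⟨h1, h2⟩ | ⟨h1, h2⟩
      · exact hmain i (i + 1) (Or.inl ⟨rfl, rfl⟩) h1 (not_lt.mp h2)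
      · exact hmain (i + 1) i (Or.inr ⟨rfl, rfl⟩) h2 (not_lt.mp h1)
  · -- some image above β q
    by_cases hall : ∀ j, p ≤ j → j ≤ q → β q < f (β j)
    · -- all images above: take r' = p
      obtain ⟨a, ha1, ham, hea⟩ := hidx p hp1 hpm
      obtain ⟨b, hb1, hbm, heb⟩ := hidx (p + 1) (by omega) (by omega)
      have hfa : β q < β a := hea ▸ hall p le_rfl (le_of_lt hpq)
      have hfb : β q < β b := heb ▸ hall (p + 1) (by omega) hpq
      have hqa : q < a := by
        by_contra h
        push_neg at h
        exact absurd hfa (not_lt.mpr (hmono' a q ha1 h hqm))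
      have hqb : q < b := by
        by_contra h
        push_neg at h
        exact absurd hfb (not_lt.mpr (hmono' b q hb1 h hqm))
      have hne' : a ≠ b := by
        intro h
        subst h
        have : β p = β (p + 1) := hinj _ (hBmem p hp1 hpm) _ (hBmem (p + 1) (by omega) (by omega))
          (by rw [hea, heb])
        exact absurd this (ne_of_lt (hsm p (p + 1) hp1 (by omega) (by omega)))
      rcases lt_or_gt_of_ne hne' with hab | hab
      · refine ⟨p, a, hp1, by omega, ha1, by omega, hsub p le_rfl hpq,
          hnotsub_right a (by omega) (by omega), edge_cover p a ?_ ?_⟩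
        · exact le_trans (min_le_left _ _) (le_of_eq hea)
        · exact le_trans (hmono' (a + 1) b (by omega) hab hbm)
            (le_trans (le_of_eq heb.symm) (le_max_right _ _))
      · refine ⟨p, b, hp1, by omega, hb1, by omega, hsub p le_rfl hpq,
          hnotsub_right b (by omega) (by omega), edge_cover p b ?_ ?_⟩
        · exact le_trans (min_le_right _ _) (le_of_eq heb)
        · exact le_trans (hmono' (b + 1) a (by omega) hab ham)
            (le_trans (le_of_eq hea.symm) (le_max_left _ _))
    · -- mixed: some image above β q, some image ≤ β q
      push_neg at hall
      obtain ⟨j', hj'p, hj'q, hj'le⟩ := hall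
      obtain ⟨i, hip, hiq, hcase⟩ := mixed_adjacent (fun n => β q < f (β n)) p q j0 j'
        hj0p hj0q hj'p hj'q habove (not_lt.mpr hj'le)
      have hmain : ∀ u v, (u = i ∧ v = i + 1 ∨ u = i + 1 ∧ v = i) →
          β q < f (β u) → f (β v) ≤ β q →
          ∃ r' r'', 1 ≤ r' ∧ r' ≤ m - 1 ∧ 1 ≤ r'' ∧ r'' ≤ m - 1 ∧
            Set.Icc (β r') (β (r' + 1)) ⊆ Set.Icc (β p) (β q) ∧
            ¬Set.Icc (β r'') (β (r'' + 1)) ⊆ Set.Icc (β p) (β q) ∧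
            HasEdge f β r' r'' := by
        intro u v huv hu hv
        have hu1 : 1 ≤ u := by omega
        have hum : u ≤ m := by omega
        obtain ⟨a, ha1, ham, hea⟩ := hidx u hu1 hum
        have hfa : β q < β a := hea ▸ hu
        have hqa : q < a := by
          by_contra h
          push_neg at h
          exact absurd hfa (not_lt.mpr (hmono' a q ha1 h hqm))
        have hq1m : q + 1 ≤ m := by omega
        refine ⟨i, q, by omega, by omega, hq1, by omega, hsub i hip hiq,
          hnotsub_right q le_rfl hq1m, edge_cover i q ?_ ?_⟩
        · rcases huv with ⟨-, rfl⟩ | ⟨-, rfl⟩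
          · exact le_trans (min_le_right _ _) hv
          · exact le_trans (min_le_left _ _) hv
        · have h1 : β (q + 1) ≤ f (β u) := hea ▸ hmono' (q + 1) a (by omega) (by omega) ham
          rcases huv with ⟨rfl, -⟩ | ⟨rfl, -⟩
          · exact le_trans h1 (le_max_left _ _)
          · exact le_trans h1 (le_max_right _ _)
      rcases hcase with ⟨h1, h2⟩ | ⟨h1, h2⟩
      · exact hmain i (i + 1) (Or.inl ⟨rfl, rfl⟩) h1 (not_lt.mp h2)
      · exact hmain (i + 1) i (Or.inr ⟨rfl, rfl⟩) h2 (not_lt.mp h1)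
end

section
/- Let I be a nondegenerate interval of ℝ, f : I → I continuous, m > 2, and let B = {β₁ < ⋯ < β_m} be an m-orbit of f. Then there exists r* ∈ {1,…,m−1} such that the digraph of B has the loop J_{r*} → J_{r*}, and for every r ∈ {1,…,m−1} there is a finite sequence r* = s₀, s₁, …, s_t = r with an edge J_{s_j} → J_{s_{j+1}} for every 0 ≤ j < t (i.e., every vertex is reachable from the loop vertex by a directed path). -/
open Set Function

/-- In the digraph of an `m`-orbit (`m > 2`) there is a loop vertex `J_{r*}` from
which every vertex is reachable by a directed path. -/
theorem digraph_reachable_from_loop (I : Set ℝ) (hI : I.OrdConnected)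
    (hne : ∃ a ∈ I, ∃ b ∈ I, a ≠ b)
    (f : ℝ → ℝ) (hf : ContinuousOn f I) (hmaps : Set.MapsTo f I I)
    (m : ℕ) (hm : 2 < m) (β : ℕ → ℝ) (hB : IsOrbit f I m β) :
    ∃ rs, 1 ≤ rs ∧ rs ≤ m - 1 ∧ HasEdge f β rs rs ∧
      ∀ r, 1 ≤ r → r ≤ m - 1 →
        ∃ (t : ℕ) (s : ℕ → ℕ), s 0 = rs ∧ s t = r ∧
          (∀ j, j ≤ t → 1 ≤ s j ∧ s j ≤ m - 1) ∧
          (∀ j, j < t → HasEdge f β (s j) (s (j + 1))) := by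
  obtain ⟨h1, h2, c, hcI, hper, himg⟩ := hB
  -- strict monotonicity of β on [1, m]
  have hlt : ∀ i j, 1 ≤ i → i < j → j ≤ m → β i < β j := by
    intro i j hi
    induction j with
    | zero => intro h h'; omega
    | succ j ih =>
      intro hij hjm
      rcases Nat.lt_or_ge i j with h | h
      · exact lt_trans (ih h (by omega)) (h1 j (by omega) (by omega))
      · have hij' : i = j := by omega
        subst hij'
        exact h1 i hi (by omega)
  have hle : ∀ i j, 1 ≤ i → i ≤ j → j ≤ m → β i ≤ β j := by
    intro i j hi hij hjm
    rcases Nat.lt_or_ge i j with h | h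
    · exact le_of_lt (hlt i j hi h hjm)
    · have : i = j := by omega
      subst this; exact le_refl _
  have hinj : ∀ i j, 1 ≤ i → i ≤ m → 1 ≤ j → j ≤ m → β i = β j → i = j := by
    intro i j hi him hj hjm heq
    rcases Nat.lt_trichotomy i j with h | h | h
    · exact absurd heq (ne_of_lt (hlt i j hi h hjm))
    · exact h
    · exact absurd heq.symm (ne_of_lt (hlt j i hj h him))
  -- every β j is on the orbit of c
  have horb : ∀ j, 1 ≤ j → j ≤ m → ∃ k, k < m ∧ f^[k] c = β j := by
    intro j hj1 hjm
    have hmem : β j ∈ β '' Set.Icc 1 m := ⟨j, ⟨hj1, hjm⟩, rfl⟩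
    rw [himg] at hmem
    exact hmem
  -- f is not the identity on orbit points
  have hfne : ∀ j, 1 ≤ j → j ≤ m → f (β j) ≠ β j := by
    intro j hj1 hjm heq
    obtain ⟨k, hk, hkeq⟩ := horb j hj1 hjm
    have hc : c = β j := by
      calc c = f^[m] c := hper.1.symm
        _ = f^[(m - k) + k] c := by rw [show (m - k) + k = m from by omega]
        _ = f^[m - k] (f^[k] c) := Function.iterate_add_apply f (m - k) k c
        _ = f^[m - k] (β j) := by rw [hkeq]
        _ = β j := Function.iterate_fixed heq (m - k)
    have hfc : f^[1] c = c := by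
      rw [Function.iterate_one, hc]
      exact heq
    exact hper.2 1 one_pos (by omega) hfc
  -- f maps orbit points to orbit points; choose the index function τ
  have hmapsorb : ∀ j, ∃ i, 1 ≤ j → j ≤ m → (1 ≤ i ∧ i ≤ m ∧ β i = f (β j)) := by
    intro j
    by_cases hj : 1 ≤ j ∧ j ≤ m
    · obtain ⟨k, hk, hkeq⟩ := horb j hj.1 hj.2
      have hmem : f (β j) ∈ {x | ∃ k, k < m ∧ f^[k] c = x} := by
        rcases Nat.lt_or_ge (k + 1) m with h | h
        · exact ⟨k + 1, h, by rw [Function.iterate_succ_apply', hkeq]⟩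
        · refine ⟨0, by omega, ?_⟩
          have hk1 : k + 1 = m := by omega
          have : f (β j) = f^[m] c := by
            rw [← hk1, Function.iterate_succ_apply', hkeq]
          rw [this, hper.1, Function.iterate_zero_apply]
      rw [← himg] at hmem
      obtain ⟨i, hi, hieq⟩ := hmem
      exact ⟨i, fun _ _ => ⟨hi.1, hi.2, hieq⟩⟩
    · exact ⟨1, fun h1' h2' => absurd ⟨h1', h2'⟩ hj⟩
  choose τ hτ using hmapsorb
  have hτne : ∀ j, 1 ≤ j → j ≤ m → τ j ≠ j := by
    intro j hj1 hjm heq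
    have := (hτ j hj1 hjm).2.2
    rw [heq] at this
    exact hfne j hj1 hjm this.symm
  -- the loop vertex rs
  set P : ℕ → Prop := fun j => 1 ≤ j ∧ j < τ j with hPdef
  have hP1 : P 1 := by
    refine ⟨le_refl _, ?_⟩
    have h := hτ 1 (le_refl _) (by omega)
    have := hτne 1 (le_refl _) (by omega)
    omega
  set rs := Nat.findGreatest P m with hrsdef
  have hrs_spec : P rs := Nat.findGreatest_spec (by omega : 1 ≤ m) hP1
  have hrs1 : 1 ≤ rs := hrs_spec.1
  have hτrs : rs < τ rs := hrs_spec.2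
  have hrs_lem : τ rs ≤ m := by
    have := hτ rs hrs1 (Nat.findGreatest_le m)
    exact this.2.1
  have hrs_le : rs ≤ m := Nat.findGreatest_le m
  have hrs_le' : rs ≤ m - 1 := by omega
  have hr1 : τ (rs + 1) ≤ rs := by
    have hnot : ¬ P (rs + 1) :=
      Nat.findGreatest_is_greatest (by omega : rs < rs + 1) (by omega)
    have hne' := hτne (rs + 1) (by omega) (by omega)
    simp only [hPdef, not_and, not_lt] at hnot
    have := hnot (by omega)
    omega
  have hτrs1_1 : 1 ≤ τ (rs + 1) := (hτ (rs + 1) (by omega) (by omega)).1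
  -- the loop edge
  have hloop : HasEdge f β rs rs := by
    intro x hx
    have e1 : f (β rs) = β (τ rs) := ((hτ rs hrs1 hrs_le).2.2).symm
    have e2 : f (β (rs + 1)) = β (τ (rs + 1)) :=
      ((hτ (rs + 1) (by omega) (by omega)).2.2).symm
    constructor
    · calc min (f (β rs)) (f (β (rs + 1))) ≤ f (β (rs + 1)) := min_le_right _ _
        _ = β (τ (rs + 1)) := e2
        _ ≤ β rs := hle _ _ hτrs1_1 hr1 hrs_le
        _ ≤ x := hx.1
    · calc x ≤ β (rs + 1) := hx.2
        _ ≤ β (τ rs) := hle _ _ (by omega) (by omega) hrs_lem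
        _ = f (β rs) := e1.symm
        _ ≤ max (f (β rs)) (f (β (rs + 1))) := le_max_left _ _
  -- the set of reachable vertices
  set V : ℕ → Prop := fun r => 1 ≤ r ∧ r ≤ m - 1 ∧
      ∃ t : ℕ, ∃ s : ℕ → ℕ, s 0 = rs ∧ s t = r ∧
        (∀ j, j ≤ t → 1 ≤ s j ∧ s j ≤ m - 1) ∧
        (∀ j, j < t → HasEdge f β (s j) (s (j + 1))) with hVdef
  have hVrs : V rs :=
    ⟨hrs1, hrs_le', 0, fun _ => rs, rfl, rfl,
      fun j _ => ⟨hrs1, hrs_le'⟩, fun j hj => absurd hj (by omega)⟩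
  have hVext : ∀ i, V i → ∀ r, 1 ≤ r → r ≤ m - 1 → HasEdge f β i r → V r := by
    rintro i ⟨hi1, hi2, t, sq, hs0, hst, hbd, hedge⟩ r hr1 hr2 he
    refine ⟨hr1, hr2, t + 1, fun j => if j = t + 1 then r else sq j, ?_, ?_, ?_, ?_⟩
    · simp only [show (0 : ℕ) ≠ t + 1 from by omega, if_false]
      exact hs0
    · simp
    · intro j hj
      by_cases h : j = t + 1
      · simp only [h, if_true]; exact ⟨hr1, hr2⟩
      · simp only [h, if_false]; exact hbd j (by omega)
    · intro j hj
      rcases Nat.lt_or_ge j t with h | h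
      · simp only [show j ≠ t + 1 from by omega, show j + 1 ≠ t + 1 from by omega,
          if_false]
        exact hedge j h
      · have hjt : j = t := by omega
        subst hjt
        simp only [show j ≠ j + 1 from by omega, if_false, if_true]
        rw [hst]
        exact he
  -- edges coming from the index picture
  have hEdge : ∀ i, 1 ≤ i → i ≤ m - 1 → ∀ r, min (τ i) (τ (i + 1)) ≤ r →
      r + 1 ≤ max (τ i) (τ (i + 1)) → HasEdge f β i r := by
    intro i hi1 hi2 r hr1 hr2
    have ha := hτ i hi1 (by omega)
    have hb := hτ (i + 1) (by omega) (by omega)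
    intro x hx
    constructor
    · rcases le_total (τ i) (τ (i + 1)) with h | h
      · calc min (f (β i)) (f (β (i + 1))) ≤ f (β i) := min_le_left _ _
          _ = β (τ i) := ha.2.2.symm
          _ ≤ β r := hle _ _ ha.1 (by omega) (by omega)
          _ ≤ x := hx.1
      · calc min (f (β i)) (f (β (i + 1))) ≤ f (β (i + 1)) := min_le_right _ _
          _ = β (τ (i + 1)) := hb.2.2.symm
          _ ≤ β r := hle _ _ hb.1 (by omega) (by omega)
          _ ≤ x := hx.1
    · rcases le_total (τ i) (τ (i + 1)) with h | h
      · calc x ≤ β (r + 1) := hx.2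
          _ ≤ β (τ (i + 1)) := hle _ _ (by omega) (by omega) hb.2.1
          _ = f (β (i + 1)) := hb.2.2
          _ ≤ max (f (β i)) (f (β (i + 1))) := le_max_right _ _
      · calc x ≤ β (r + 1) := hx.2
          _ ≤ β (τ i) := hle _ _ (by omega) (by omega) ha.2.1
          _ = f (β i) := ha.2.2
          _ ≤ max (f (β i)) (f (β (i + 1))) := le_max_left _ _
  have hBlock : ∀ i, V i → ∀ r, min (τ i) (τ (i + 1)) ≤ r →
      r + 1 ≤ max (τ i) (τ (i + 1)) → V r := by
    intro i hVi r h1' h2'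
    have hi1 := hVi.1
    have hi2 := hVi.2.1
    have ha := hτ i hi1 (by omega)
    have hb := hτ (i + 1) (by omega) (by omega)
    have hr1' : 1 ≤ r := by
      have := ha.1; have := hb.1; omega
    have hr2' : r ≤ m - 1 := by
      have := ha.2.1; have := hb.2.1; omega
    exact hVext i hVi r hr1' hr2' (hEdge i hi1 hi2 r h1' h2')
  -- connectivity along the path graph
  set Conn : ℕ → ℕ → Prop := fun a b => ∀ i, min a b ≤ i → i + 1 ≤ max a b → V i
    with hConndef
  have hConnSymm : ∀ a b, Conn a b → Conn b a := by
    intro a b h i h1' h2'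
    exact h i (by omega) (by omega)
  have hConnTrans : ∀ a b c', Conn a b → Conn b c' → Conn a c' := by
    intro a b c' hab hbc i h1' h2'
    by_cases h : min a b ≤ i ∧ i + 1 ≤ max a b
    · exact hab i h.1 h.2
    · rw [not_and_or] at h
      rcases h with h | h
      · push_neg at h
        exact hbc i (by omega) (by omega)
      · push_neg at h
        exact hbc i (by omega) (by omega)
  have hBC : ∀ i, V i → Conn (τ i) (τ (i + 1)) := by
    intro i hVi j hj1 hj2
    exact hBlock i hVi j hj1 hj2
  set K : ℕ → Prop := fun j => 1 ≤ j ∧ j ≤ m ∧ Conn j rs with hKdef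
  have hKbetween : ∀ j j', K j → ((rs ≤ j' ∧ j' ≤ j) ∨ (j ≤ j' ∧ j' ≤ rs)) → K j' := by
    rintro j j' ⟨hj1, hj2, hconn⟩ hcase
    rcases hcase with ⟨h, h'⟩ | ⟨h, h'⟩
    · exact ⟨by omega, by omega, fun i hi1 hi2 => hconn i (by omega) (by omega)⟩
    · exact ⟨by omega, by omega, fun i hi1 hi2 => hconn i (by omega) (by omega)⟩
  have hKrs : K rs := by
    refine ⟨hrs1, hrs_le, ?_⟩
    intro i h1' h2'
    exact absurd h2' (by omega)
  have hstep0 : Conn (τ rs) rs := by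
    intro i h1' h2'
    exact hBlock rs hVrs i (by omega) (by omega)
  have hup : ∀ d, K (rs + d) → Conn (τ (rs + d)) rs := by
    intro d
    induction d with
    | zero => intro _; exact hstep0
    | succ d ih =>
      intro hK
      have hKd : K (rs + d) := hKbetween _ _ hK (Or.inl ⟨by omega, by omega⟩)
      have hV : V (rs + d) := hK.2.2 (rs + d) (by omega) (by omega)
      have hc1 : Conn (τ (rs + d)) (τ (rs + d + 1)) := hBC (rs + d) hV
      exact hConnTrans _ _ _ (hConnSymm _ _ hc1) (ih hKd)
  have hdown : ∀ d j, j + d = rs → K j → Conn (τ j) rs := by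
    intro d
    induction d with
    | zero =>
      intro j hj hK
      have : j = rs := by omega
      subst this
      exact hstep0
    | succ d ih =>
      intro j hj hK
      have hKj1 : K (j + 1) := hKbetween _ _ hK (Or.inr ⟨by omega, by omega⟩)
      have hV : V j := hK.2.2 j (by omega) (by omega)
      have hc1 : Conn (τ j) (τ (j + 1)) := hBC j hV
      exact hConnTrans _ _ _ hc1 (ih (j + 1) (by omega) hKj1)
  have hτK : ∀ j, K j → K (τ j) := by
    intro j hK
    have h := hτ j hK.1 hK.2.1
    refine ⟨h.1, h.2.1, ?_⟩
    rcases Nat.le_total rs j with hc | hc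
    · have := hup (j - rs)
      rw [show rs + (j - rs) = j from by omega] at this
      exact this hK
    · exact hdown (rs - j) j (by omega) hK
  have hiterK : ∀ k, K (τ^[k] rs) := by
    intro k
    induction k with
    | zero => exact hKrs
    | succ k ih =>
      rw [Function.iterate_succ_apply']
      exact hτK _ ih
  have hiterβ : ∀ k j, 1 ≤ j → j ≤ m →
      1 ≤ τ^[k] j ∧ τ^[k] j ≤ m ∧ β (τ^[k] j) = f^[k] (β j) := by
    intro k
    induction k with
    | zero => intro j h1' h2'; exact ⟨h1', h2', rfl⟩
    | succ k ih =>
      intro j h1' h2'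
      obtain ⟨ha, hb, hc⟩ := ih j h1' h2'
      have h := hτ (τ^[k] j) ha hb
      refine ⟨?_, ?_, ?_⟩
      · rw [Function.iterate_succ_apply']; exact h.1
      · rw [Function.iterate_succ_apply']; exact h.2.1
      · rw [Function.iterate_succ_apply', Function.iterate_succ_apply' f, h.2.2, hc]
  have hKall : ∀ j, 1 ≤ j → j ≤ m → K j := by
    intro j hj1 hjm
    obtain ⟨a, ham, ha⟩ := horb rs hrs1 hrs_le
    obtain ⟨b, hbm, hb⟩ := horb j hj1 hjm
    set k := b + m - a with hkdef
    have hiter := (hiterβ k rs hrs1 hrs_le).2.2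
    have hfj : f^[k] (β rs) = β j := by
      rw [← ha, ← Function.iterate_add_apply]
      rw [show k + a = b + m from by omega]
      rw [Function.iterate_add_apply f b m c, hper.1, hb]
    have heq : β (τ^[k] rs) = β j := by rw [hiter, hfj]
    have hidx : τ^[k] rs = j :=
      hinj _ _ (hiterβ k rs hrs1 hrs_le).1 (hiterβ k rs hrs1 hrs_le).2.1 hj1 hjm heq
    exact hidx ▸ hiterK k
  -- conclusion
  refine ⟨rs, hrs1, hrs_le', hloop, ?_⟩
  intro r hr1' hr2'
  have hVr : V r := by
    rcases Nat.lt_or_ge r rs with h | h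
    · have hK := hKall r hr1' (by omega)
      exact hK.2.2 r (by omega) (by omega)
    · have hK := hKall (r + 1) (by omega) (by omega)
      exact hK.2.2 r (by omega) (by omega)
  exact hVr.2.2
end

section
/- Let I be a nondegenerate interval of ℝ, f : I → I continuous with a periodic point of period n > 1, and let B = {β₁ < ⋯ < β_n} be its orbit. Suppose the digraph of B contains a primitive cycle of length m, i.e., indices i₀, i₁, …, i_{m−1} ∈ {1,…,n−1} with an edge J_{i_j} → J_{i_{j+1 mod m}} for every j, such that no proper divisor d of m satisfies i_{(j+d) mod m} = i_j for all j. Then f has a periodic point y of period exactly m with f^k(y) ∈ J_{i_k} for all 0 ≤ k < m. -/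
open Set Function

lemma cover_inc {f : ℝ → ℝ} {a b c d : ℝ} (hab : a ≤ b) (hcd : c ≤ d)
    (hf : ContinuousOn f (Icc a b)) (hac : f a ≤ c) (hdb : d ≤ f b) :
    ∃ p q, a ≤ p ∧ p ≤ q ∧ q ≤ b ∧ f p = c ∧ f q = d ∧ ∀ x ∈ Icc p q, f x ∈ Icc c d := by
  set T : Set ℝ := Icc a b ∩ f ⁻¹' {d} with hT
  have hTclosed : IsClosed T := hf.preimage_isClosed_of_isClosed isClosed_Icc isClosed_singleton
  have hTne : T.Nonempty := by
    obtain ⟨q₀, hq₀, hfq₀⟩ := intermediate_value_Icc hab hf ⟨hac.trans hcd, hdb⟩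
    exact ⟨q₀, hq₀, hfq₀⟩
  have hTbdd : BddBelow T := ⟨a, fun x hx => hx.1.1⟩
  set q := sInf T with hq
  have hqT : q ∈ T := hTclosed.csInf_mem hTne hTbdd
  have hqa : a ≤ q := hqT.1.1
  have hqb : q ≤ b := hqT.1.2
  have hfq : f q = d := hqT.2
  set S : Set ℝ := Icc a q ∩ f ⁻¹' {c} with hS
  have hfq' : ContinuousOn f (Icc a q) := hf.mono (Icc_subset_Icc le_rfl hqb)
  have hSclosed : IsClosed S := hfq'.preimage_isClosed_of_isClosed isClosed_Icc isClosed_singleton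
  have hSne : S.Nonempty := by
    obtain ⟨p₀, hp₀, hfp₀⟩ := intermediate_value_Icc hqa hfq' ⟨hac, by rw [hfq]; exact hcd⟩
    exact ⟨p₀, hp₀, hfp₀⟩
  have hSbdd : BddAbove S := ⟨q, fun x hx => hx.1.2⟩
  set p := sSup S with hp
  have hpS : p ∈ S := hSclosed.csSup_mem hSne hSbdd
  have hpa : a ≤ p := hpS.1.1
  have hpq : p ≤ q := hpS.1.2
  have hfp : f p = c := hpS.2
  refine ⟨p, q, hpa, hpq, hqb, hfp, hfq, ?_⟩
  intro x hx
  constructor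
  · by_contra hlt
    push_neg at hlt
    have hxp : p < x := by
      rcases eq_or_lt_of_le hx.1 with h | h
      · exfalso; rw [← h, hfp] at hlt; exact absurd rfl (ne_of_gt hlt)
      · exact h
    have hfxq : ContinuousOn f (Icc x q) :=
      hf.mono (Icc_subset_Icc (hpa.trans hxp.le) hqb)
    obtain ⟨z, hz, hfz⟩ := intermediate_value_Icc hx.2 hfxq ⟨hlt.le, by rw [hfq]; exact hcd⟩
    have hzS : z ∈ S := ⟨⟨(hpa.trans hxp.le).trans hz.1, hz.2⟩, hfz⟩
    have h1 := le_csSup hSbdd hzS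
    have h2 : x ≤ p := hz.1.trans h1
    linarith
  · by_contra hlt
    push_neg at hlt
    have hfpx : ContinuousOn f (Icc p x) :=
      hf.mono (Icc_subset_Icc hpa (hx.2.trans hqb))
    obtain ⟨z, hz, hfz⟩ := intermediate_value_Icc hx.1 hfpx ⟨by rw [hfp]; exact hcd, hlt.le⟩
    have hzT : z ∈ T := ⟨⟨hpa.trans hz.1, (hz.2.trans hx.2).trans hqb⟩, hfz⟩
    have hqz : q ≤ z := csInf_le hTbdd hzT
    have hzq : z = q := le_antisymm (hz.2.trans hx.2) hqz
    have hxq : x = q := le_antisymm hx.2 (hzq ▸ hz.2)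
    rw [hxq, hfq] at hlt
    linarith

lemma cover {f : ℝ → ℝ} {a b c d : ℝ} (hab : a ≤ b) (hcd : c ≤ d)
    (hf : ContinuousOn f (Icc a b))
    (hsub : Icc c d ⊆ Icc (min (f a) (f b)) (max (f a) (f b))) :
    ∃ p q, a ≤ p ∧ p ≤ q ∧ q ≤ b ∧ (∀ x ∈ Icc p q, f x ∈ Icc c d) ∧
      ((f p = c ∧ f q = d) ∨ (f p = d ∧ f q = c)) := by
  have hc := hsub ⟨le_rfl, hcd⟩
  have hd := hsub ⟨hcd, le_rfl⟩
  rcases le_total (f a) (f b) with hle | hle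
  · have hac : f a ≤ c := by
      have := hc.1; rwa [min_eq_left hle] at this
    have hdb : d ≤ f b := by
      have := hd.2; rwa [max_eq_right hle] at this
    obtain ⟨p, q, h1, h2, h3, h4, h5, h6⟩ := cover_inc hab hcd hf hac hdb
    exact ⟨p, q, h1, h2, h3, h6, Or.inl ⟨h4, h5⟩⟩
  · have hbc : f b ≤ c := by
      have := hc.1; rwa [min_eq_right hle] at this
    have hda : d ≤ f a := by
      have := hd.2; rwa [max_eq_left hle] at this
    set g : ℝ → ℝ := fun x => f (-x) with hg
    have hgc : ContinuousOn g (Icc (-b) (-a)) := by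
      apply hf.comp (continuous_neg.continuousOn)
      intro x hx
      show -x ∈ Icc a b
      exact ⟨by linarith [hx.2], by linarith [hx.1]⟩
    have h1 : g (-b) = f b := by simp [hg]
    have h2 : g (-a) = f a := by simp [hg]
    obtain ⟨p', q', hp'1, hp'q', hq'1, hgp', hgq', hmem⟩ :=
      cover_inc (by linarith : -b ≤ -a) hcd hgc (by rw [h1]; exact hbc) (by rw [h2]; exact hda)
    refine ⟨-q', -p', by linarith, by linarith, by linarith, ?_, Or.inr ⟨?_, ?_⟩⟩
    · intro x hx
      have hmx : -x ∈ Icc p' q' := ⟨by linarith [hx.2], by linarith [hx.1]⟩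
      have := hmem (-x) hmx
      simpa [hg] using this
    · have : g q' = d := hgq'
      simpa [hg] using this
    · have : g p' = c := hgp'
      simpa [hg] using this

lemma two_intervals {β : ℕ → ℝ} {n : ℕ}
    (hmono : ∀ a b : ℕ, 1 ≤ a → a < b → b ≤ n → β a < β b) :
    ∀ a b : ℕ, 1 ≤ a → a + 1 ≤ n → 1 ≤ b → b + 1 ≤ n → a ≠ b →
    ∀ x : ℝ, x ∈ Icc (β a) (β (a+1)) → x ∈ Icc (β b) (β (b+1)) →
    ∃ t, 1 ≤ t ∧ t ≤ n ∧ x = β t := by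
  have key : ∀ a b : ℕ, 1 ≤ a → a + 1 ≤ n → 1 ≤ b → b + 1 ≤ n → a < b →
      ∀ x : ℝ, x ∈ Icc (β a) (β (a+1)) → x ∈ Icc (β b) (β (b+1)) →
      ∃ t, 1 ≤ t ∧ t ≤ n ∧ x = β t := by
    intro a b ha han hb hbn hab x hx1 hx2
    have hba : b ≤ a + 1 := by
      by_contra h
      push_neg at h
      have : β (a+1) < β b := hmono (a+1) b (by omega) h (by omega)
      have h1 := hx1.2
      have h2 := hx2.1
      linarith
    have hbeq : b = a + 1 := by omega
    refine ⟨b, by omega, by omega, ?_⟩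
    have h1 : x ≤ β b := by rw [hbeq]; exact hx1.2
    exact le_antisymm h1 hx2.1
  intro a b ha han hb hbn hab x hx1 hx2
  rcases Nat.lt_or_ge a b with h | h
  · exact key a b ha han hb hbn h x hx1 hx2
  · have hba : b < a := by omega
    exact key b a hb hbn ha han hba x hx2 hx1


/-- **Straffin's lemma.** If `f` has a periodic point of period `n > 1` with orbit
`B = {β₁ < ⋯ < β_n}`, and the digraph of `B` contains a primitive cycle
`J_{i₀} → J_{i₁} → ⋯ → J_{i_{m-1}} → J_{i₀}` of length `m`, then `f` has a periodic
point `y` of period exactly `m` with `f^[k] y ∈ J_{i_k}` for all `0 ≤ k < m`. -/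
theorem straffin_lemma (I : Set ℝ) (hI : I.OrdConnected)
    (hne : ∃ a ∈ I, ∃ b ∈ I, a ≠ b)
    (f : ℝ → ℝ) (hf : ContinuousOn f I) (hmaps : Set.MapsTo f I I)
    (n : ℕ) (hn : 1 < n) (β : ℕ → ℝ) (hB : IsOrbit f I n β)
    (m : ℕ) (hm : 1 ≤ m) (i : ℕ → ℕ)
    (hrange : ∀ j, j < m → 1 ≤ i j ∧ i j ≤ n - 1)
    (hcycle : ∀ j, j < m → HasEdge f β (i j) (i ((j + 1) % m)))
    (hprim : ¬∃ d, d ∣ m ∧ 0 < d ∧ d < m ∧ ∀ j, j < m → i ((j + d) % m) = i j) :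
    ∃ y, PeriodicOfPeriod f m y ∧
      ∀ k, k < m → f^[k] y ∈ Set.Icc (β (i k)) (β (i k + 1)) := by
  obtain ⟨hβlt, hβI, c, hcI, hc, hBeq⟩ := hB
  have hm0 : 0 < m := hm
  have hn0 : 0 < n := by omega
  have hmono : ∀ a b : ℕ, 1 ≤ a → a < b → b ≤ n → β a < β b := by
    intro a b ha hab hbn
    induction b with
    | zero => exact absurd hab (Nat.not_lt_zero a)
    | succ b ih =>
      rcases Nat.lt_succ_iff_lt_or_eq.mp hab with h | h
      · exact lt_trans (ih h (by omega)) (hβlt b (by omega) (by omega))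
      · subst h; exact hβlt a ha (by omega)
  have hJI : ∀ r, r < m → Icc (β (i r)) (β (i r + 1)) ⊆ I := by
    intro r hr
    obtain ⟨h1, h2⟩ := hrange r hr
    exact hI.out (hβI _ h1 (by omega)) (hβI _ (by omega) (by omega))
  have hJlt : ∀ r, r < m → β (i r) < β (i r + 1) := by
    intro r hr
    obtain ⟨h1, h2⟩ := hrange r hr
    exact hmono _ _ h1 (by omega) (by omega)
  -- the chain of nested intervals
  have chain : ∀ j, j ≤ m → ∃ p q : ℝ, p ≤ q ∧
      (∀ k, k ≤ j → ∀ x ∈ Icc p q,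
        f^[k] x ∈ Icc (β (i ((m - j + k) % m))) (β (i ((m - j + k) % m) + 1))) ∧
      ((f^[j] p = β (i 0) ∧ f^[j] q = β (i 0 + 1)) ∨
       (f^[j] p = β (i 0 + 1) ∧ f^[j] q = β (i 0))) := by
    intro j
    induction j with
    | zero =>
      intro _
      refine ⟨β (i 0), β (i 0 + 1), (hJlt 0 hm0).le, ?_, Or.inl ⟨rfl, rfl⟩⟩
      intro k hk x hx
      have hk0 : k = 0 := Nat.le_zero.mp hk
      subst hk0
      have hidx : m - 0 + 0 = m := by omega
      rw [hidx, Nat.mod_self]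
      simpa using hx
    | succ j ih =>
      intro hj1
      have hjm : j < m := hj1
      obtain ⟨p, q, hpq, hit, hend⟩ := ih (Nat.le_of_lt hjm)
      have hr'm : m - (j+1) < m := by omega
      have hedge := hcycle (m - (j+1)) hr'm
      unfold HasEdge at hedge
      have hidx : (m - (j+1) + 1) % m = (m - j) % m := by
        have h : m - (j+1) + 1 = m - j := by omega
        rw [h]
      rw [hidx] at hedge
      have hpq_sub : Icc p q ⊆ Icc (β (i ((m - j) % m))) (β (i ((m - j) % m) + 1)) := by
        intro x hx
        have := hit 0 (Nat.zero_le _) x hx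
        simpa using this
      have hsub2 := hpq_sub.trans hedge
      obtain ⟨p', q', hp'1, hp'q', hq'1, hmem, hends⟩ :=
        cover (hJlt _ hr'm).le hpq (hf.mono (hJI _ hr'm)) hsub2
      refine ⟨p', q', hp'q', ?_, ?_⟩
      · intro k hk x hx
        cases k with
        | zero =>
          have hidx2 : (m - (j+1) + 0) % m = m - (j+1) := by
            rw [Nat.add_zero, Nat.mod_eq_of_lt hr'm]
          rw [hidx2]
          simp only [Function.iterate_zero, id]
          exact ⟨hp'1.trans hx.1, hx.2.trans hq'1⟩
        | succ k =>
          have hfx : f x ∈ Icc p q := hmem x hx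
          have hk' : k ≤ j := by omega
          have hres := hit k hk' (f x) hfx
          have hidx2 : (m - (j+1) + (k+1)) % m = (m - j + k) % m := by
            have h : m - (j+1) + (k+1) = m - j + k := by omega
            rw [h]
          rw [Function.iterate_succ_apply, hidx2]
          exact hres
      · rcases hends with ⟨h1, h2⟩ | ⟨h1, h2⟩
        · rcases hend with ⟨e1, e2⟩ | ⟨e1, e2⟩
          · exact Or.inl ⟨by rw [Function.iterate_succ_apply, h1, e1],
              by rw [Function.iterate_succ_apply, h2, e2]⟩
          · exact Or.inr ⟨by rw [Function.iterate_succ_apply, h1, e1],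
              by rw [Function.iterate_succ_apply, h2, e2]⟩
        · rcases hend with ⟨e1, e2⟩ | ⟨e1, e2⟩
          · exact Or.inr ⟨by rw [Function.iterate_succ_apply, h1, e2],
              by rw [Function.iterate_succ_apply, h2, e1]⟩
          · exact Or.inl ⟨by rw [Function.iterate_succ_apply, h1, e2],
              by rw [Function.iterate_succ_apply, h2, e1]⟩
  obtain ⟨p, q, hpq, hit, hend⟩ := chain m le_rfl
  have hit' : ∀ k, k ≤ m → ∀ x ∈ Icc p q,
      f^[k] x ∈ Icc (β (i (k % m))) (β (i (k % m) + 1)) := by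
    intro k hk x hx
    have hres := hit k hk x hx
    have hidx : m - m + k = k := by omega
    rwa [hidx] at hres
  have hpmem : p ∈ Icc (β (i 0)) (β (i 0 + 1)) := by
    have := hit' 0 (Nat.zero_le _) p ⟨le_rfl, hpq⟩
    simpa using this
  have hqmem : q ∈ Icc (β (i 0)) (β (i 0 + 1)) := by
    have := hit' 0 (Nat.zero_le _) q ⟨hpq, le_rfl⟩
    simpa using this
  have hcont : ∀ k, k ≤ m → ContinuousOn (f^[k]) (Icc p q) := by
    intro k
    induction k with
    | zero =>
      intro _
      simp only [Function.iterate_zero]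
      exact continuousOn_id
    | succ k ih =>
      intro hk
      have hik := ih (by omega)
      rw [Function.iterate_succ']
      exact hf.comp hik (fun x hx => hJI (k % m) (Nat.mod_lt _ hm0) (hit' k (by omega) x hx))
  have hgc : ContinuousOn (fun x => f^[m] x - x) (Icc p q) :=
    (hcont m le_rfl).sub continuousOn_id
  have hyex : ∃ y ∈ Icc p q, f^[m] y - y = 0 := by
    rcases hend with ⟨e1, e2⟩ | ⟨e1, e2⟩
    · have h1 : f^[m] p - p ≤ 0 := by rw [e1]; linarith [hpmem.1]
      have h2 : (0:ℝ) ≤ f^[m] q - q := by rw [e2]; linarith [hqmem.2]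
      obtain ⟨y, hy, hy0⟩ := intermediate_value_Icc hpq hgc ⟨h1, h2⟩
      exact ⟨y, hy, hy0⟩
    · have h1 : (0:ℝ) ≤ f^[m] p - p := by rw [e1]; linarith [hpmem.2]
      have h2 : f^[m] q - q ≤ 0 := by rw [e2]; linarith [hqmem.1]
      obtain ⟨y, hy, hy0⟩ := intermediate_value_Icc' hpq hgc ⟨h2, h1⟩
      exact ⟨y, hy, hy0⟩
  obtain ⟨y, hyIcc, hy0⟩ := hyex
  have hyfix : f^[m] y = y := sub_eq_zero.mp hy0
  have hitin : ∀ k, k < m → f^[k] y ∈ Icc (β (i k)) (β (i k + 1)) := by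
    intro k hk
    have := hit' k hk.le y hyIcc
    rwa [Nat.mod_eq_of_lt hk] at this
  -- orbit facts
  have hBorb : ∀ x : ℝ, x ∈ β '' Icc 1 n ↔ ∃ k, k < n ∧ f^[k] c = x := by
    intro x
    rw [hBeq]
    exact Iff.rfl
  have hcper : f^[n] c = c := hc.1
  have hcp : Function.IsPeriodicPt f n c := hcper
  have hiter_c : ∀ a : ℕ, f^[a] c = f^[a % n] c := fun a => (hcp.iterate_mod_apply a).symm
  have hB_inv : ∀ x ∈ β '' Icc 1 n, ∀ j : ℕ, f^[j] x ∈ β '' Icc 1 n := by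
    intro x hx j
    obtain ⟨k, hk, hkeq⟩ := (hBorb x).mp hx
    rw [hBorb]
    refine ⟨(j + k) % n, Nat.mod_lt _ hn0, ?_⟩
    rw [← hiter_c, Function.iterate_add_apply, hkeq]
  have hB_per : ∀ x ∈ β '' Icc 1 n, f^[n] x = x ∧ ∀ k, 0 < k → k < n → f^[k] x ≠ x := by
    intro x hx
    obtain ⟨k, hk, hkeq⟩ := (hBorb x).mp hx
    constructor
    · rw [← hkeq, ← Function.iterate_add_apply, Nat.add_comm, Function.iterate_add_apply, hcper]
    · intro j hj0 hjn hjx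
      apply hc.2 j hj0 hjn
      have h1 : f^[j + k] c = f^[k] c := by
        rw [Function.iterate_add_apply, hkeq, hjx]
      have h2 := congrArg (f^[n - k]) h1
      rw [← Function.iterate_add_apply, ← Function.iterate_add_apply] at h2
      have e1 : n - k + (j + k) = j + n := by omega
      have e2 : n - k + k = n := by omega
      rw [e1, e2, hcper] at h2
      calc f^[j] c = f^[j] (f^[n] c) := by rw [hcper]
        _ = f^[j + n] c := (Function.iterate_add_apply f j n c).symm
        _ = c := h2
  have hyper : Function.IsPeriodicPt f m y := hyfix
  have hX_mod : ∀ j : ℕ, f^[j % m] y = f^[j] y := fun j => hyper.iterate_mod_apply j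
  set D := Function.minimalPeriod f y with hD
  have hD_dvd : D ∣ m := hyper.minimalPeriod_dvd
  have hD_pos : 0 < D := hyper.minimalPeriod_pos hm0
  have hDy : f^[D] y = y := Function.isPeriodicPt_minimalPeriod f y
  have hnotlt : ¬ D < m := by
    intro hDm
    by_cases hCB : ∃ k, k < m ∧ f^[k] y ∈ β '' Icc 1 n
    · -- Case B : orbit of y hits B, so y ∈ B, y has period n
      obtain ⟨k₀, hk₀m, hk₀B⟩ := hCB
      have hyB : y ∈ β '' Icc 1 n := by
        have h1 : f^[m - k₀ + k₀] y = f^[m - k₀] (f^[k₀] y) :=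
          Function.iterate_add_apply f (m - k₀) k₀ y
        have h2 : m - k₀ + k₀ = m := by omega
        have h3 : y = f^[m - k₀] (f^[k₀] y) := by rw [← h1, h2, hyfix]
        rw [h3]
        exact hB_inv _ hk₀B _
      obtain ⟨hyn, hyexact⟩ := hB_per y hyB
      have hDn : D = n := by
        have hdvd : D ∣ n := Function.IsPeriodicPt.minimalPeriod_dvd (hyn : IsPeriodicPt f n y)
        have hle : D ≤ n := Nat.le_of_dvd hn0 hdvd
        rcases lt_or_eq_of_le hle with h | h
        · exact absurd hDy (hyexact D hD_pos h)
        · exact h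
      have hnm : n < m := hDn ▸ hDm
      have hndvd : n ∣ m := hDn ▸ hD_dvd
      have hgE : ∀ j : ℕ, HasEdge f β (i (j % m)) (i ((j + 1) % m)) := by
        intro j
        have h := hcycle (j % m) (Nat.mod_lt _ hm0)
        have hidx : (j % m + 1) % m = (j + 1) % m := Nat.mod_add_mod j m 1
        rwa [hidx] at h
      have hgX : ∀ j : ℕ, f^[j] y ∈ Icc (β (i (j % m))) (β (i (j % m) + 1)) := by
        intro j
        have := hitin (j % m) (Nat.mod_lt _ hm0)
        rwa [hX_mod j] at this
      have hXn : ∀ j : ℕ, f^[j + n] y = f^[j] y := by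
        intro j
        rw [Function.iterate_add_apply, hyn]
      have hXB : ∀ j : ℕ, f^[j] y ∈ β '' Icc 1 n := fun j => hB_inv y hyB j
      have hβt : ∀ j : ℕ, ∃ t, 1 ≤ t ∧ t ≤ n ∧ β t = f^[j] y := by
        intro j
        obtain ⟨t, ht, hteq⟩ := hXB j
        exact ⟨t, ht.1, ht.2, hteq⟩
      have hbnd : ∀ j : ℕ, ∀ t : ℕ, 1 ≤ t → t ≤ n → β t = f^[j] y →
          i (j % m) ≤ t ∧ t ≤ i (j % m) + 1 := by
        intro j t ht1 htn hteq
        have hx := hgX j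
        rw [← hteq] at hx
        obtain ⟨hr1, hr2⟩ := hrange (j % m) (Nat.mod_lt _ hm0)
        constructor
        · by_contra h
          push_neg at h
          have := hmono t _ ht1 h (by omega)
          have h1 := hx.1
          linarith
        · by_contra h
          push_neg at h
          have := hmono _ t (by omega) h htn
          have h2 := hx.2
          linarith
      have hβ1B : β 1 ∈ β '' Icc 1 n := ⟨1, ⟨le_rfl, by omega⟩, rfl⟩
      obtain ⟨k₁, hk₁, hk₁eq⟩ := (hBorb _).mp hβ1B
      obtain ⟨k₂, hk₂, hk₂eq⟩ := (hBorb _).mp hyB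
      set j₀ := k₁ + n - k₂ with hj₀
      have hXj₀ : f^[j₀] y = β 1 := by
        rw [← hk₂eq, ← Function.iterate_add_apply]
        have h3 : j₀ + k₂ = k₁ + n := by omega
        rw [h3, hiter_c (k₁ + n), Nat.add_mod_right, Nat.mod_eq_of_lt hk₁]
        exact hk₁eq
      have hbase : ∀ j : ℕ, f^[j] y = β 1 → i (j % m) = 1 := by
        intro j hj
        have hb := hbnd j 1 le_rfl (by omega) hj.symm
        obtain ⟨h1, _⟩ := hrange (j % m) (Nat.mod_lt _ hm0)
        omega
      have hstep : ∀ j : ℕ, i (j % m) = i ((j + n) % m) →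
          i ((j + 1) % m) = i ((j + n + 1) % m) := by
        intro j hgj
        by_contra hne2
        obtain ⟨t, ht1, htn, hteq⟩ := hβt (j + 1)
        have hb := hbnd (j + 1) t ht1 htn hteq
        have hteq' : β t = f^[j + n + 1] y := by
          rw [hteq]
          have e : j + n + 1 = (j + 1) + n := by omega
          rw [e, hXn]
        have hb' := hbnd (j + n + 1) t ht1 htn hteq'
        obtain ⟨hbr1, hbr2⟩ := hrange ((j + 1) % m) (Nat.mod_lt _ hm0)
        obtain ⟨hbr1', hbr2'⟩ := hrange ((j + n + 1) % m) (Nat.mod_lt _ hm0)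
        have ht2 : 2 ≤ t := by omega
        have htn1 : t + 1 ≤ n := by omega
        have hE1 := hgE j
        have hE2 := hgE (j + n)
        rw [← hgj] at hE2
        unfold HasEdge at hE1 hE2
        set a := i (j % m) with ha
        have htt1 : β (t - 1) < β t := by
          have e : t - 1 + 1 = t := by omega
          have := hmono (t - 1) t (by omega) (by omega) (by omega)
          exact this
        have htt2 : β t < β (t + 1) := hmono t (t + 1) (by omega) (by omega) htn1
        have hsubs : Icc (β (t - 1)) (β t)
              ⊆ Icc (min (f (β a)) (f (β (a + 1)))) (max (f (β a)) (f (β (a + 1)))) ∧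
            Icc (β t) (β (t + 1))
              ⊆ Icc (min (f (β a)) (f (β (a + 1)))) (max (f (β a)) (f (β (a + 1)))) := by
          rcases (by omega : (i ((j + 1) % m) = t - 1 ∧ i ((j + n + 1) % m) = t) ∨
              (i ((j + 1) % m) = t ∧ i ((j + n + 1) % m) = t - 1)) with ⟨e1, e2⟩ | ⟨e1, e2⟩
          · constructor
            · have h := hE1
              rw [e1, (by omega : t - 1 + 1 = t)] at h
              exact h
            · have h := hE2
              rw [e2] at h
              exact h
          · constructor
            · have h := hE2
              rw [e2, (by omega : t - 1 + 1 = t)] at h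
              exact h
            · have h := hE1
              rw [e1] at h
              exact h
        obtain ⟨s, hs1, hsn, hseq⟩ := hβt j
        have hsb := hbnd j s hs1 hsn hseq
        have hfs : f (β s) = β t := by
          rw [hseq, ← Function.iterate_succ_apply' f j y]
          exact hteq.symm
        have hlow : min (f (β a)) (f (β (a + 1))) ≤ β (t - 1) :=
          (hsubs.1 ⟨le_rfl, htt1.le⟩).1
        have hhigh : β (t + 1) ≤ max (f (β a)) (f (β (a + 1))) :=
          (hsubs.2 ⟨htt2.le, le_rfl⟩).2
        rcases (by omega : s = a ∨ s = a + 1) with hsa | hsa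
        · rw [hsa] at hfs
          have h1 : f (β (a + 1)) ≤ β (t - 1) := by
            rcases min_le_iff.mp hlow with h | h
            · rw [hfs] at h; linarith
            · exact h
          have h2 : β (t + 1) ≤ f (β (a + 1)) := by
            rcases le_max_iff.mp hhigh with h | h
            · rw [hfs] at h; linarith
            · exact h
          linarith
        · rw [hsa] at hfs
          have h1 : f (β a) ≤ β (t - 1) := by
            rcases min_le_iff.mp hlow with h | h
            · exact h
            · rw [hfs] at h; linarith
          have h2 : β (t + 1) ≤ f (β a) := by
            rcases le_max_iff.mp hhigh with h | h
            · exact h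
            · rw [hfs] at h; linarith
          linarith
      have hall : ∀ s : ℕ, i ((j₀ + s) % m) = i ((j₀ + s + n) % m) := by
        intro s
        induction s with
        | zero =>
          have h1 : i (j₀ % m) = 1 := hbase j₀ hXj₀
          have h2 : i ((j₀ + n) % m) = 1 := by
            apply hbase
            rw [hXn j₀]
            exact hXj₀
          simpa using h1.trans h2.symm
        | succ s ih =>
          have h := hstep (j₀ + s) ih
          have e1 : j₀ + s + 1 = j₀ + (s + 1) := by omega
          have e2 : j₀ + s + n + 1 = j₀ + (s + 1) + n := by omega
          rw [e1, e2] at h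
          exact h
      apply hprim
      refine ⟨n, hndvd, hn0, hnm, ?_⟩
      intro j hj
      have h := hall (j + 2 * m - j₀)
      have hj₀m : j₀ ≤ 2 * m := by omega
      have e1 : j₀ + (j + 2 * m - j₀) = j + 2 * m := by omega
      rw [e1] at h
      have e2 : (j + 2 * m) % m = j := by
        rw [Nat.add_mul_mod_self_right, Nat.mod_eq_of_lt hj]
      have e3 : (j + 2 * m + n) % m = (j + n) % m := by
        rw [(by omega : j + 2 * m + n = j + n + 2 * m), Nat.add_mul_mod_self_right]
      rw [e2, e3] at h
      exact h.symm
    · -- Case A : the orbit of y avoids B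
      push_neg at hCB
      apply hprim
      refine ⟨D, hD_dvd, hD_pos, hDm, ?_⟩
      intro j hj
      by_contra hne2
      have h1 := hitin j hj
      have h2 : f^[j] y ∈ Icc (β (i ((j + D) % m))) (β (i ((j + D) % m) + 1)) := by
        have h := hitin ((j + D) % m) (Nat.mod_lt _ hm0)
        rw [hX_mod (j + D)] at h
        rw [Function.iterate_add_apply, hDy] at h
        exact h
      obtain ⟨ha1, ha2⟩ := hrange j hj
      obtain ⟨hb1, hb2⟩ := hrange ((j + D) % m) (Nat.mod_lt _ hm0)
      obtain ⟨t, ht1, htn, hteq⟩ :=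
        two_intervals hmono (i j) (i ((j + D) % m)) ha1 (by omega) hb1 (by omega)
          (fun h => hne2 h.symm) (f^[j] y) h1 h2
      exact hCB j hj (by rw [hteq]; exact ⟨t, ⟨ht1, htn⟩, rfl⟩)
  have hDm' : D = m := le_antisymm (Nat.le_of_dvd hm0 hD_dvd) (not_lt.mp hnotlt)
  refine ⟨y, ⟨hyfix, ?_⟩, hitin⟩
  intro k hk0 hkm hky
  have hdk : D ∣ k := Function.IsPeriodicPt.minimalPeriod_dvd (hky : IsPeriodicPt f k y)
  rw [hDm'] at hdk
  have := Nat.le_of_dvd hk0 hdk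
  omega
end

section
/- Let ψ : [−1,1] → [−1,1] be a symmetric unimodal map, i.e., ψ is continuous, ψ(0) = 1, ψ(−x) = ψ(x) for all x ∈ [−1,1], ψ is strictly increasing on [−1,0] and strictly decreasing on [0,1]. Set a = −ψ(1) and b = ψ(a), and assume 0 < ψ(b) < a < b < 1 (note ψ(b) = ψ(ψ(a))). Then the second iterate ψ∘ψ maps the interval [−a, a] into itself: for every x ∈ [−a, a], ψ(ψ(x)) ∈ [−a, a]. -/
open Set Function

/-- For a symmetric unimodal map `ψ : [-1,1] → [-1,1]` with `a = -ψ 1`, `b = ψ a`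
and `0 < ψ b < a < b < 1`, the second iterate `ψ ∘ ψ` maps `[-a, a]` into itself. -/
theorem second_iterate_maps_into (ψ : ℝ → ℝ)
    (hmaps : Set.MapsTo ψ (Set.Icc (-1 : ℝ) 1) (Set.Icc (-1 : ℝ) 1))
    (hcont : ContinuousOn ψ (Set.Icc (-1 : ℝ) 1))
    (h0 : ψ 0 = 1)
    (hsymm : ∀ x ∈ Set.Icc (-1 : ℝ) 1, ψ (-x) = ψ x)
    (hinc : StrictMonoOn ψ (Set.Icc (-1 : ℝ) 0))
    (hdec : StrictAntiOn ψ (Set.Icc (0 : ℝ) 1))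
    (a b : ℝ) (ha : a = -ψ 1) (hb : b = ψ a)
    (hcond : 0 < ψ b ∧ ψ b < a ∧ a < b ∧ b < 1) :
    ∀ x ∈ Set.Icc (-a) a, ψ (ψ x) ∈ Set.Icc (-a) a := by
  obtain ⟨hψb0, hψba, hab, hb1⟩ := hcond
  have ha0 : 0 < a := lt_trans hψb0 hψba
  have ha1 : a < 1 := lt_trans hab hb1
  have hb0 : 0 < b := lt_trans ha0 hab
  have hanti : AntitoneOn ψ (Set.Icc (0 : ℝ) 1) := hdec.antitoneOn
  have haI : a ∈ Set.Icc (0 : ℝ) 1 := ⟨ha0.le, ha1.le⟩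
  have h1I : (1 : ℝ) ∈ Set.Icc (0 : ℝ) 1 := ⟨zero_le_one, le_rfl⟩
  have hbI : b ∈ Set.Icc (0 : ℝ) 1 := ⟨hb0.le, hb1.le⟩
  have h0I : (0 : ℝ) ∈ Set.Icc (0 : ℝ) 1 := ⟨le_rfl, zero_le_one⟩
  have key : ∀ y ∈ Set.Icc (0 : ℝ) a, ψ (ψ y) ∈ Set.Icc (-a) a := by
    intro y ⟨hy0, hya⟩
    have hyI : y ∈ Set.Icc (0 : ℝ) 1 := ⟨hy0, hya.trans ha1.le⟩
    have h1 : b ≤ ψ y := hb ▸ hanti hyI haI hya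
    have h2 : ψ y ≤ 1 := by
      have := hanti h0I hyI hy0
      rwa [h0] at this
    have hψyI : ψ y ∈ Set.Icc (0 : ℝ) 1 := ⟨(hb0.le.trans h1), h2⟩
    constructor
    · have := hanti hψyI h1I h2
      rw [ha]
      linarith
    · have := hanti hbI hψyI h1
      linarith
  intro x ⟨hx1, hx2⟩
  rcases le_total 0 x with hx0 | hx0
  · exact key x ⟨hx0, hx2⟩
  · have hxI : x ∈ Set.Icc (-1 : ℝ) 1 := ⟨le_trans (by linarith) hx1, le_trans hx2 ha1.le⟩
    have hsx : ψ (-x) = ψ x := hsymm x hxI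
    rw [← hsx]
    exact key (-x) ⟨by linarith, by linarith⟩
end

section
/- Let ψ : [−1,1] → [−1,1] be a symmetric unimodal map, i.e., ψ is continuous, ψ(0) = 1, ψ(−x) = ψ(x) for all x ∈ [−1,1], ψ is strictly increasing on [−1,0] and strictly decreasing on [0,1]. Set a = −ψ(1) and b = ψ(a), and assume 0 < ψ(b) < a < b < 1 (note ψ(b) = ψ(ψ(a))). Let φ = ψ∘ψ∘ψ be the third iterate of ψ. Then φ maps [−a, a] into [b, 1] and maps [b, 1] into [−a, a]; consequently φ∘φ = ψ^[6] maps [−a, a] into itself. -/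
open Set Function

/-- For a symmetric unimodal map `ψ : [-1,1] → [-1,1]` with `a = -ψ 1`, `b = ψ a`
and `0 < ψ b < a < b < 1`, the third iterate `φ = ψ ∘ ψ ∘ ψ` maps `[-a, a]` into
`[b, 1]` and `[b, 1]` into `[-a, a]`; consequently `φ ∘ φ = ψ^[6]` maps `[-a, a]`
into itself. -/
theorem third_iterate_swaps_intervals (ψ : ℝ → ℝ)
    (hmaps : Set.MapsTo ψ (Set.Icc (-1 : ℝ) 1) (Set.Icc (-1 : ℝ) 1))
    (hcont : ContinuousOn ψ (Set.Icc (-1 : ℝ) 1))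
    (h0 : ψ 0 = 1)
    (hsymm : ∀ x ∈ Set.Icc (-1 : ℝ) 1, ψ (-x) = ψ x)
    (hinc : StrictMonoOn ψ (Set.Icc (-1 : ℝ) 0))
    (hdec : StrictAntiOn ψ (Set.Icc (0 : ℝ) 1))
    (a b : ℝ) (ha : a = -ψ 1) (hb : b = ψ a)
    (hcond : 0 < ψ b ∧ ψ b < a ∧ a < b ∧ b < 1) :
    Set.MapsTo (ψ ∘ ψ ∘ ψ) (Set.Icc (-a) a) (Set.Icc b 1) ∧
    Set.MapsTo (ψ ∘ ψ ∘ ψ) (Set.Icc b 1) (Set.Icc (-a) a) ∧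
    Set.MapsTo ((ψ ∘ ψ ∘ ψ) ∘ (ψ ∘ ψ ∘ ψ)) (Set.Icc (-a) a) (Set.Icc (-a) a) := by
  obtain ⟨hψb0, hψba, hab, hb1⟩ := hcond
  have ha0 : 0 < a := hψb0.trans hψba
  have ha1 : a < 1 := hab.trans hb1
  have hb0 : 0 < b := ha0.trans hab
  have hanti := hdec.antitoneOn
  have M1 : Set.MapsTo ψ (Set.Icc (-a) a) (Set.Icc b 1) := by
    intro x hx
    obtain ⟨hx1, hx2⟩ := hx
    have habs : |x| ≤ a := abs_le.mpr ⟨hx1, hx2⟩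
    have hmem : |x| ∈ Set.Icc (0:ℝ) 1 := ⟨abs_nonneg x, habs.trans ha1.le⟩
    have heq : ψ x = ψ |x| := by
      rcases le_or_gt 0 x with h | h
      · rw [abs_of_nonneg h]
      · rw [abs_of_neg h]
        exact (hsymm x ⟨by linarith, by linarith⟩).symm
    have h1 : ψ a ≤ ψ |x| := hanti hmem ⟨ha0.le, ha1.le⟩ habs
    have h2 : ψ |x| ≤ ψ 0 := hanti ⟨le_rfl, zero_le_one⟩ hmem (abs_nonneg x)
    rw [heq]
    exact ⟨hb ▸ h1, h0 ▸ h2⟩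
  have M2 : Set.MapsTo ψ (Set.Icc b 1) (Set.Icc (-a) a) := by
    intro x hx
    obtain ⟨hx1, hx2⟩ := hx
    have hmem : x ∈ Set.Icc (0:ℝ) 1 := ⟨hb0.le.trans hx1, hx2⟩
    have h1 : ψ 1 ≤ ψ x := hanti hmem ⟨zero_le_one, le_rfl⟩ hx2
    have h2 : ψ x ≤ ψ b := hanti ⟨hb0.le, hb1.le⟩ hmem hx1
    constructor
    · rw [ha]; linarith
    · linarith [hb ▸ hψba]
  refine ⟨M1.comp (M2.comp M1), M2.comp (M1.comp M2), ?_⟩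
  exact (M2.comp (M1.comp M2)).comp (M1.comp (M2.comp M1))
end
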